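/- arXiv:2101.03816 — 5 statements merged into one kernel-verified Lean document; each statement's English description precedes it below -/
import Mathlib

section
/- Let a>0, m≥1, 1≤p_j<∞ for j=1,…,m and 1/p = Σ_{j=1}^m 1/p_j. Let ν and ω_1,…,ω_m be weights such that (i) sup_{B∈𝓑_a} ((1/γ(B))∫_B ν dγ)^{1/p} · ∏_{j=1}^m ((1/γ(B))∫_B ω_j^{1-p_j'} dγ)^{1/p_j'} < ∞, where for those j with p_j=1 the j-th factor is interpreted as (ess inf_{x∈B} ω_j(x))^{-1}, and (ii) the measure ν dγ satisfies the a-local 5-condition: there is C_0 such that ∫_{5B} ν dγ ≤ C_0 ∫_B ν dγ for all B ∈ 𝓑_a, where 5B is the concentric ball of 5 times the radius. Then there is a constant C such that ‖𝓜_a(f_1,…,f_m)‖_{L^{p,∞}(ℝ^d,γ,ν)} ≤ C ∏_{j=1}^m ‖f_j‖_{L^{p_j}(ℝ^d,γ,ω_j)} for all f_1,…,f_m ∈ L¹_loc(γ). -/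
open MeasureTheory ENNReal Real Set Metric
open scoped Classical

noncomputable section

/-- ℝ^d with the Euclidean norm. -/
abbrev Euc (d : ℕ) := EuclideanSpace ℝ (Fin d)

/-- The Gaussian measure dγ(x) = π^{-d/2} e^{-|x|²} dx. -/
def gaussMeasure (d : ℕ) : Measure (Euc d) :=
  volume.withDensity fun x => ENNReal.ofReal (Real.pi ^ (-(d : ℝ) / 2) * Real.exp (-‖x‖ ^ 2))

/-- m(x) = min(1, 1/|x|) (with value 1 at x = 0). -/
def adm {d : ℕ} (x : Euc d) : ℝ := if ‖x‖ ≤ 1 then 1 else ‖x‖⁻¹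

/-- `B(c,r) ∈ 𝓑_a`: the admissibility condition for a ball of center `c` and radius `r`. -/
def IsAdm {d : ℕ} (a : ℝ) (c : Euc d) (r : ℝ) : Prop := 0 < r ∧ r < a * adm c

/-- The conjugate exponent p' = p/(p-1). -/
def conjExp (p : ℝ) : ℝ := p / (p - 1)

/-- The local multi(sub)linear Hardy–Littlewood maximal operator 𝓜_a on the Gaussian
measure space. -/
def multiMax {d m : ℕ} (a : ℝ) (f : Fin m → Euc d → ℝ) (x : Euc d) : ℝ≥0∞ :=
  ⨆ (c : Euc d) (r : ℝ) (_ : IsAdm a c r) (_ : x ∈ ball c r),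
    ∏ j : Fin m, (gaussMeasure d (ball c r))⁻¹ *
      ∫⁻ y in ball c r, ENNReal.ofReal |f j y| ∂gaussMeasure d

/-- The weighted weak norm ‖g‖_{L^{p,∞}(ℝ^d,γ,ν)} = sup_{λ>0} λ (∫_{{g>λ}} ν dγ)^{1/p}. -/
def weakNorm {d : ℕ} (p : ℝ) (ν : Euc d → ℝ) (g : Euc d → ℝ≥0∞) : ℝ≥0∞ :=
  ⨆ (t : ℝ) (_ : 0 < t),
    ENNReal.ofReal t *
      (∫⁻ x in {x | ENNReal.ofReal t < g x}, ENNReal.ofReal (ν x) ∂gaussMeasure d) ^ (1 / p)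

/-- The weighted Gaussian Lebesgue norm ‖f‖_{L^p(ℝ^d,γ,ω)}. -/
def gLpNorm {d : ℕ} (p : ℝ) (ω : Euc d → ℝ) (f : Euc d → ℝ) : ℝ≥0∞ :=
  (∫⁻ x, ENNReal.ofReal |f x| ^ p * ENNReal.ofReal (ω x) ∂gaussMeasure d) ^ (1 / p)

/-!
On an admissible ball `B`, Hölder's inequality with the weight `ω_j` bounds the average of `|f_j|`
by the `j`-th factor of the two-weight constant times `(⨍_B |f_j|^{p_j} ω_j)^{1/p_j}`. Multiplying
over `j` and using `1/p = ∑ 1/p_j`, condition (i) gives `t ν(B)^{1/p} ≤ A ∏_j ‖f_j‖_{L^{p_j}(B,ω_j)}`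
whenever the product of the averages over `B` exceeds `t`. Admissible balls have radius less than
`a`, so the Vitali covering lemma selects a countable disjoint family of such balls whose 5-fold
enlargements cover `{𝓜_a f > t}`. The 5-condition (ii) moves `ν` from the enlarged balls back to
the chosen ones, and as the exponents `p/p_j` sum to 1, Hölder's inequality for sums over the
disjoint family bounds `∑_B ∏_j ‖f_j‖^p_{L^{p_j}(B,ω_j)}` by `∏_j ‖f_j‖^p_{L^{p_j}(ω_j)}`.
-/
lemma ENNReal.prod_rpow_eq_rpow_sum {ι : Type*} (x : ℝ≥0∞) (s : Finset ι) {y : ι → ℝ}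
    (hy : ∀ i ∈ s, 0 ≤ y i) : ∏ i ∈ s, x ^ y i = x ^ ∑ i ∈ s, y i := by
  classical
  induction s using Finset.induction with
  | empty => simp
  | insert i s hi ih =>
    rw [Finset.prod_insert hi, Finset.sum_insert hi,
      ih fun j hj => hy j (Finset.mem_insert_of_mem hj),
      ENNReal.rpow_add_of_nonneg _ _ (hy i (Finset.mem_insert_self i s))
        (Finset.sum_nonneg fun j hj => hy j (Finset.mem_insert_of_mem hj))]

lemma ENNReal.tsum_prod_rpow_le_prod_tsum_rpow {ι : Type*} [Countable ι] {m : ℕ}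
    (X : ι → Fin m → ℝ≥0∞) {θ : Fin m → ℝ} (hθ : ∀ j, 0 ≤ θ j) (hθ1 : ∑ j, θ j = 1) :
    ∑' i, ∏ j, X i j ^ θ j ≤ ∏ j, (∑' i, X i j) ^ θ j := by
  let _ : MeasurableSpace ι := ⊤
  simpa [lintegral_count] using ENNReal.lintegral_prod_norm_pow_le (μ := Measure.count)
    Finset.univ (f := fun j i => X i j) (fun j _ => (measurable_of_countable _).aemeasurable)
    hθ1 (fun j _ => hθ j)

section

variable {α : Type*} [MeasurableSpace α]

/-- The factor of a weight `w` in the two-weight condition (i), on the set `s`. -/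
def weightFactor (μ : Measure α) (s : Set α) (p : ℝ) (w : α → ℝ≥0∞) : ℝ≥0∞ :=
  if p = 1 then (essInf w (μ.restrict s))⁻¹
  else ((μ s)⁻¹ * ∫⁻ x in s, w x ^ (1 - conjExp p) ∂μ) ^ (1 / conjExp p)

lemma holderConjugate_conjExp {p : ℝ} (hp : 1 < p) : p.HolderConjugate (conjExp p) :=
  Real.HolderConjugate.conjExponent hp

lemma essInf_ne_top_of_ae_ne_top {μ : Measure α} (hμ : μ ≠ 0) {w : α → ℝ≥0∞}
    (hw_top : ∀ᵐ x ∂μ, w x ≠ ⊤) : essInf w μ ≠ ⊤ := by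
  have : (ae μ).NeBot := ae_neBot.2 hμ
  obtain ⟨x, hx_top, hx⟩ := (hw_top.and (ae_essInf_le (f := w) (μ := μ))).exists
  exact ne_top_of_le_ne_top hx_top hx

lemma lintegral_le_essInf_inv_mul {μ : Measure α} (hμ : μ ≠ 0) {f w : α → ℝ≥0∞}
    (hw_top : ∀ᵐ x ∂μ, w x ≠ ⊤) (hw : essInf w μ ≠ 0) :
    ∫⁻ x, f x ∂μ ≤ (essInf w μ)⁻¹ * ∫⁻ x, f x * w x ∂μ := by
  have he_top := essInf_ne_top_of_ae_ne_top hμ hw_top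
  calc ∫⁻ x, f x ∂μ = (essInf w μ)⁻¹ * ∫⁻ x, essInf w μ * f x ∂μ := by
        rw [lintegral_const_mul' _ _ he_top, ← mul_assoc, ENNReal.inv_mul_cancel hw he_top,
          one_mul]
    _ ≤ (essInf w μ)⁻¹ * ∫⁻ x, f x * w x ∂μ := by
        refine mul_le_mul_right (lintegral_mono_ae ?_) _
        filter_upwards [ae_essInf_le (f := w) (μ := μ)] with x hx
        rw [mul_comm]
        gcongr

/-- Hölder's inequality for `f = (f w^{1/p}) w^{-1/p}`. -/
lemma lintegral_le_weighted_holder {μ : Measure α} {p : ℝ} (hp : 1 < p) {f w : α → ℝ≥0∞}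
    (hf : AEMeasurable f μ) (hw : AEMeasurable w μ) (hw_top : ∀ᵐ x ∂μ, w x ≠ ⊤)
    (hw_int : ∫⁻ x, w x ^ (1 - conjExp p) ∂μ ≠ ⊤) :
    ∫⁻ x, f x ∂μ ≤ (∫⁻ x, f x ^ p * w x ∂μ) ^ (1 / p) *
      (∫⁻ x, w x ^ (1 - conjExp p) ∂μ) ^ (1 / conjExp p) := by
  set q := conjExp p
  have hpq := holderConjugate_conjExp hp
  have hw0 : ∀ᵐ x ∂μ, w x ≠ 0 := by
    filter_upwards [ae_lt_top' (hw.pow_const (1 - q)) hw_int] with x hx h0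
    rw [h0, ENNReal.zero_rpow_of_neg (by linarith [hpq.symm.lt])] at hx
    exact lt_irrefl _ hx
  calc ∫⁻ x, f x ∂μ = ∫⁻ x, f x * w x ^ (1 / p) * w x ^ (-(1 / p)) ∂μ := by
        refine lintegral_congr_ae ?_
        filter_upwards [hw0, hw_top] with x h0 h_top
        rw [mul_assoc, ← ENNReal.rpow_add _ _ h0 h_top, add_neg_cancel, ENNReal.rpow_zero,
          mul_one]
    _ ≤ (∫⁻ x, (f x * w x ^ (1 / p)) ^ p ∂μ) ^ (1 / p) *
          (∫⁻ x, (w x ^ (-(1 / p))) ^ q ∂μ) ^ (1 / q) :=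
        ENNReal.lintegral_mul_le_Lp_mul_Lq μ hpq (hf.mul (hw.pow_const _)) (hw.pow_const _)
    _ = (∫⁻ x, f x ^ p * w x ∂μ) ^ (1 / p) * (∫⁻ x, w x ^ (1 - q) ∂μ) ^ (1 / q) := by
        have hexp : -(1 / p) * q = 1 - q := by
          have := hpq.mul_eq_add
          field_simp [hpq.ne_zero]
          linarith
        simp_rw [ENNReal.mul_rpow_of_nonneg _ _ hpq.nonneg, ← ENNReal.rpow_mul, hexp,
          one_div_mul_cancel hpq.ne_zero, ENNReal.rpow_one]

section

variable {μ : Measure α} {s : Set α} {p : ℝ} {w : α → ℝ≥0∞}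

lemma weightFactor_ne_zero (hp : 1 ≤ p) (hw : AEMeasurable w (μ.restrict s))
    (hw_top : ∀ᵐ x ∂μ.restrict s, w x ≠ ⊤) (hs0 : μ s ≠ 0) (hs_top : μ s ≠ ⊤) :
    weightFactor μ s p w ≠ 0 := by
  have hμs : μ.restrict s ≠ 0 := by rwa [Ne, Measure.restrict_eq_zero]
  unfold weightFactor
  split_ifs with h1
  · exact ENNReal.inv_ne_zero.2 (essInf_ne_top_of_ae_ne_top hμs hw_top)
  · have hq := (holderConjugate_conjExp (lt_of_le_of_ne hp (Ne.symm h1))).symm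
    have hint : ∫⁻ x in s, w x ^ (1 - conjExp p) ∂μ ≠ 0 := by
      rw [Ne, lintegral_eq_zero_iff' (hw.pow_const _)]
      intro h
      have : (ae (μ.restrict s)).NeBot := ae_neBot.2 hμs
      obtain ⟨x, hx, hx_top⟩ := (h.and hw_top).exists
      rw [Pi.zero_apply, ENNReal.rpow_eq_zero_iff] at hx
      rcases hx with ⟨-, hneg⟩ | ⟨htop, -⟩
      · linarith [hq.lt]
      · exact hx_top htop
    rw [Ne, ENNReal.rpow_eq_zero_iff, not_or]
    refine ⟨fun h => ?_, fun h => by linarith [hq.one_div_pos, h.2]⟩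
    rcases mul_eq_zero.1 h.1 with h0 | h0
    · exact ENNReal.inv_ne_zero.2 hs_top h0
    · exact hint h0

lemma inv_mul_setLIntegral_le_weightFactor_mul (hp : 1 ≤ p) {f : α → ℝ≥0∞}
    (hf : AEMeasurable f (μ.restrict s)) (hw : AEMeasurable w (μ.restrict s))
    (hw_top : ∀ᵐ x ∂μ.restrict s, w x ≠ ⊤) (hs0 : μ s ≠ 0) (hs_top : μ s ≠ ⊤)
    (hD : weightFactor μ s p w ≠ ⊤) :
    (μ s)⁻¹ * ∫⁻ x in s, f x ∂μ ≤
      weightFactor μ s p w * ((μ s)⁻¹ * ∫⁻ x in s, f x ^ p * w x ∂μ) ^ (1 / p) := by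
  have hμs : μ.restrict s ≠ 0 := by rwa [Ne, Measure.restrict_eq_zero]
  unfold weightFactor at hD ⊢
  split_ifs at hD ⊢ with h1
  · subst h1
    have he : essInf w (μ.restrict s) ≠ 0 := by simpa using hD
    calc (μ s)⁻¹ * ∫⁻ x in s, f x ∂μ
        ≤ (μ s)⁻¹ * ((essInf w (μ.restrict s))⁻¹ * ∫⁻ x in s, f x * w x ∂μ) :=
          mul_le_mul_right (lintegral_le_essInf_inv_mul hμs hw_top he) _
      _ = _ := by simp only [ENNReal.rpow_one, div_one]; ring
  · have hpq := holderConjugate_conjExp (lt_of_le_of_ne hp (Ne.symm h1))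
    set q := conjExp p
    set S := ∫⁻ x in s, w x ^ (1 - q) ∂μ
    have hS : S ≠ ⊤ := by
      intro h
      rw [h, ENNReal.mul_top (ENNReal.inv_ne_zero.2 hs_top),
        ENNReal.top_rpow_of_pos hpq.symm.one_div_pos] at hD
      exact hD rfl
    calc (μ s)⁻¹ * ∫⁻ x in s, f x ∂μ
        ≤ (μ s)⁻¹ * ((∫⁻ x in s, f x ^ p * w x ∂μ) ^ (1 / p) * S ^ (1 / q)) :=
          mul_le_mul_right (lintegral_le_weighted_holder hpq.lt hf hw hw_top hS) _
      _ = ((μ s)⁻¹) ^ (1 / q + 1 / p) *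
            ((∫⁻ x in s, f x ^ p * w x ∂μ) ^ (1 / p) * S ^ (1 / q)) := by
          rw [hpq.symm.one_div_add_one_div, div_one, ENNReal.rpow_one]
      _ = _ := by
          rw [ENNReal.rpow_add_of_nonneg _ _ hpq.symm.one_div_nonneg hpq.one_div_nonneg,
            ENNReal.mul_rpow_of_nonneg _ _ hpq.symm.one_div_nonneg,
            ENNReal.mul_rpow_of_nonneg _ _ hpq.one_div_nonneg]
          ring

end

lemma mul_rpow_le_of_le_prod_average {m : ℕ} {μ : Measure α} {s : Set α}
    (hs0 : μ s ≠ 0) (hs_top : μ s ≠ ⊤) {pp : Fin m → ℝ} (hpp : ∀ j, 1 ≤ pp j) {p : ℝ}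
    (hp : 1 / p = ∑ j, 1 / pp j) {f w : Fin m → α → ℝ≥0∞}
    (hf : ∀ j, AEMeasurable (f j) (μ.restrict s)) (hw : ∀ j, AEMeasurable (w j) (μ.restrict s))
    (hw_top : ∀ j, ∀ᵐ x ∂μ.restrict s, w j x ≠ ⊤) {V A t : ℝ≥0∞} (hA_top : A ≠ ⊤)
    (hA : ((μ s)⁻¹ * V) ^ (1 / p) * ∏ j, weightFactor μ s (pp j) (w j) ≤ A)
    (ht : t ≤ ∏ j, (μ s)⁻¹ * ∫⁻ x in s, f j x ∂μ) :
    t * V ^ (1 / p) ≤ A * ∏ j, (∫⁻ x in s, f j x ^ pp j * w j x ∂μ) ^ (1 / pp j) := by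
  set D := fun j => weightFactor μ s (pp j) (w j)
  set K := ((μ s)⁻¹ * V) ^ (1 / p)
  have hpp_nonneg : ∀ j, 0 ≤ 1 / pp j := fun j => one_div_nonneg.2 (by linarith [hpp j])
  have hp_nonneg : 0 ≤ 1 / p := hp ▸ Finset.sum_nonneg fun j _ => hpp_nonneg j
  by_cases hK : K = 0
  · obtain ⟨h0, hpos⟩ := (ENNReal.rpow_eq_zero_iff.1 hK).resolve_right
      fun h => h.2.not_ge hp_nonneg
    have hV : V = 0 := (mul_eq_zero.1 h0).resolve_left (ENNReal.inv_ne_zero.2 hs_top)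
    rw [hV, ENNReal.zero_rpow_of_pos hpos, mul_zero]
    exact zero_le
  have hD0 : ∀ j, D j ≠ 0 := fun j => weightFactor_ne_zero (hpp j) (hw j) (hw_top j) hs0 hs_top
  have hD_top : ∀ j, D j ≠ ⊤ := by
    intro j hj
    have : K * ∏ i, D i = ⊤ := by
      rw [← Finset.mul_prod_erase _ _ (Finset.mem_univ j), hj,
        ENNReal.top_mul (Finset.prod_ne_zero_iff.2 fun i _ => hD0 i), ENNReal.mul_top hK]
    exact hA_top (top_le_iff.1 (this ▸ hA))
  set Y := fun j => ∫⁻ x in s, f j x ^ pp j * w j x ∂μ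
  calc t * V ^ (1 / p)
      ≤ (∏ j, D j * ((μ s)⁻¹ * Y j) ^ (1 / pp j)) * V ^ (1 / p) := by
        refine mul_le_mul_left (ht.trans (Finset.prod_le_prod' fun j _ => ?_)) _
        exact inv_mul_setLIntegral_le_weightFactor_mul (hpp j) (hf j) (hw j) (hw_top j) hs0
          hs_top (hD_top j)
    _ = (K * ∏ j, D j) * ∏ j, Y j ^ (1 / pp j) := by
        simp_rw [Finset.prod_mul_distrib, ENNReal.mul_rpow_of_nonneg _ _ (hpp_nonneg _),
          Finset.prod_mul_distrib, ENNReal.prod_rpow_eq_rpow_sum _ _ fun j _ => hpp_nonneg j,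
          ← hp, K, ENNReal.mul_rpow_of_nonneg _ _ hp_nonneg]
        ring
    _ ≤ A * ∏ j, Y j ^ (1 / pp j) := mul_le_mul_left hA _

lemma mul_measure_rpow_le_of_disjoint_cover {ι : Type*} {m : ℕ} (ν : Measure α)
    (ρ : Fin m → Measure α) {pp : Fin m → ℝ} (hpp : ∀ j, 0 < pp j) {p : ℝ} (hp0 : 0 < p)
    (hp : 1 / p = ∑ j, 1 / pp j) {u : Set ι} (hu : u.Countable) {B B' : ι → Set α}
    (hB : ∀ i ∈ u, MeasurableSet (B i)) (hdisj : u.PairwiseDisjoint B) {E : Set α}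
    (hE : E ⊆ ⋃ i ∈ u, B' i) {C₀ A t : ℝ≥0∞} (hC₀ : ∀ i ∈ u, ν (B' i) ≤ C₀ * ν (B i))
    (hball : ∀ i ∈ u, t * ν (B i) ^ (1 / p) ≤ A * ∏ j, ρ j (B i) ^ (1 / pp j)) :
    t * ν E ^ (1 / p) ≤ C₀ ^ (1 / p) * A * ∏ j, ρ j univ ^ (1 / pp j) := by
  set θ : Fin m → ℝ := fun j => p / pp j
  have hθ : ∀ j, 0 ≤ θ j := fun j => (div_pos hp0 (hpp j)).le
  have hθ1 : ∑ j, θ j = 1 := by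
    simp only [θ, div_eq_mul_one_div p, ← Finset.mul_sum, ← hp, mul_one_div_cancel hp0.ne']
  have hpow : ∀ (x : ℝ≥0∞) (y : Fin m → ℝ≥0∞),
      (x * ∏ j, y j ^ (1 / pp j)) ^ p = x ^ p * ∏ j, y j ^ θ j := by
    intro x y
    simp_rw [ENNReal.mul_rpow_of_nonneg _ _ hp0.le, ← ENNReal.prod_rpow_of_nonneg hp0.le,
      ← ENNReal.rpow_mul, θ, one_div_mul_eq_div]
  have hpow' : ∀ x y : ℝ≥0∞, (x * y ^ (1 / p)) ^ p = x ^ p * y := by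
    intro x y
    rw [ENNReal.mul_rpow_of_nonneg _ _ hp0.le, ← ENNReal.rpow_mul, one_div_mul_cancel hp0.ne',
      ENNReal.rpow_one]
  have : Countable u := hu.to_subtype
  rw [← ENNReal.rpow_le_rpow_iff hp0, hpow', mul_assoc, ENNReal.mul_rpow_of_nonneg _ _ hp0.le,
    hpow, ← ENNReal.rpow_mul, one_div_mul_cancel hp0.ne', ENNReal.rpow_one]
  calc t ^ p * ν E
      ≤ t ^ p * ∑' i : u, ν (B' i) := by
        gcongr
        exact (measure_mono hE).trans (measure_biUnion_le ν hu B')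
    _ ≤ t ^ p * ∑' i : u, C₀ * ν (B i) := by
        gcongr with i
        exact hC₀ i i.2
    _ = C₀ * ∑' i : u, t ^ p * ν (B i) := by
        rw [ENNReal.tsum_mul_left, ENNReal.tsum_mul_left]
        ring
    _ ≤ C₀ * ∑' i : u, A ^ p * ∏ j, ρ j (B i) ^ θ j := by
        refine mul_le_mul_right (ENNReal.tsum_le_tsum fun i => ?_) _
        rw [← hpow, ← hpow']
        exact ENNReal.rpow_le_rpow (hball i i.2) hp0.le
    _ = C₀ * (A ^ p * ∑' i : u, ∏ j, ρ j (B i) ^ θ j) := by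
        rw [ENNReal.tsum_mul_left]
    _ ≤ C₀ * (A ^ p * ∏ j, (∑' i : u, ρ j (B i)) ^ θ j) := by
        gcongr
        exact ENNReal.tsum_prod_rpow_le_prod_tsum_rpow _ hθ hθ1
    _ ≤ C₀ * (A ^ p * ∏ j, ρ j univ ^ θ j) := by
        gcongr with j
        · exact hθ j
        rw [← measure_biUnion hu hdisj hB]
        exact measure_mono (subset_univ _)

end

lemma exists_countable_disjoint_subfamily_ball {X ι : Type*} [PseudoMetricSpace X]
    [TopologicalSpace.SeparableSpace X] {T : Set ι} {c : ι → X} {r : ι → ℝ} {E : Set X}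
    (hE : E ⊆ ⋃ i ∈ T, ball (c i) (r i)) {R : ℝ} (hr : ∀ i ∈ T, 0 < r i ∧ r i ≤ R) :
    ∃ u ⊆ T, u.Countable ∧ u.PairwiseDisjoint (fun i => ball (c i) (r i)) ∧
      E ⊆ ⋃ i ∈ u, ball (c i) (5 * r i) := by
  obtain ⟨u, huT, hdisj, hcover⟩ := Vitali.exists_disjoint_subfamily_covering_enlargement_ball
    T c r R (fun i hi => (hr i hi).2) 5 (by norm_num)
  refine ⟨u, huT, hdisj.countable_of_isOpen (fun _ _ => isOpen_ball)
    (fun i hi => nonempty_ball.2 (hr i (huT hi)).1), hdisj,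
    hE.trans (iUnion₂_subset fun i hi => ?_)⟩
  obtain ⟨j, hj, hsub⟩ := hcover i hi
  exact hsub.trans (subset_biUnion_of_mem (u := fun i => ball (c i) (5 * r i)) hj)

instance {d : ℕ} : SFinite (gaussMeasure d) := by
  unfold gaussMeasure
  infer_instance

lemma gaussMeasure_ball_ne_zero {d : ℕ} (c : Euc d) {r : ℝ} (hr : 0 < r) :
    gaussMeasure d (ball c r) ≠ 0 := by
  rw [gaussMeasure, Ne, withDensity_apply_eq_zero' (by fun_prop)]
  have hpos : {x : Euc d | ENNReal.ofReal (π ^ (-(d : ℝ) / 2) * exp (-‖x‖ ^ 2)) ≠ 0} = univ :=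
    eq_univ_of_forall fun x => (ENNReal.ofReal_pos.2 (by positivity)).ne'
  rw [hpos, univ_inter]
  exact (measure_ball_pos volume c hr).ne'

lemma gaussMeasure_ball_ne_top {d : ℕ} (c : Euc d) (r : ℝ) : gaussMeasure d (ball c r) ≠ ⊤ := by
  have hle : gaussMeasure d ≤ ENNReal.ofReal (π ^ (-(d : ℝ) / 2)) • volume := by
    rw [gaussMeasure, ← withDensity_const]
    refine withDensity_mono (ae_of_all _ fun x => ENNReal.ofReal_le_ofReal ?_)
    exact mul_le_of_le_one_right (by positivity) (exp_le_one_iff.2 (by nlinarith [sq_nonneg ‖x‖]))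
  refine ne_top_of_le_ne_top ?_ (hle _)
  exact ENNReal.mul_ne_top ENNReal.ofReal_ne_top measure_ball_lt_top.ne

lemma IsAdm.radius_lt {d : ℕ} {a : ℝ} {c : Euc d} {r : ℝ} (h : IsAdm a c r) : r < a := by
  obtain ⟨hr, hra⟩ := h
  have hadm : 0 < adm c ∧ adm c ≤ 1 := by
    unfold adm
    split_ifs with hc
    · exact ⟨one_pos, le_rfl⟩
    · have hc : 1 < ‖c‖ := not_le.1 hc
      exact ⟨inv_pos.2 (by linarith), inv_le_one_of_one_le₀ hc.le⟩
  nlinarith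

lemma setOf_lt_multiMax_subset {d m : ℕ} (a : ℝ) (f : Fin m → Euc d → ℝ) (s : ℝ≥0∞) :
    {x | s < multiMax a f x} ⊆ ⋃ b ∈ {b : Euc d × ℝ | IsAdm a b.1 b.2 ∧
      s < ∏ j, (gaussMeasure d (ball b.1 b.2))⁻¹ *
        ∫⁻ y in ball b.1 b.2, ENNReal.ofReal |f j y| ∂gaussMeasure d}, ball b.1 b.2 := by
  intro x (hx : s < multiMax a f x)
  simp only [multiMax, lt_iSup_iff] at hx
  obtain ⟨c, r, hadm, hxB, hlt⟩ := hx
  exact mem_biUnion (x := (c, r)) ⟨hadm, hlt⟩ hxB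

theorem stmt0_general {d m : ℕ} (hm : 0 < m) (a : ℝ)
    (pp : Fin m → ℝ) (hpp : ∀ j, 1 ≤ pp j) (p : ℝ) (hp : 1 / p = ∑ j, 1 / pp j)
    (ν : Euc d → ℝ)
    (ω : Fin m → Euc d → ℝ)
    (hωloc : ∀ j, LocallyIntegrable (ω j) (gaussMeasure d))
    -- (i) the two-weight condition
    (hAp : (⨆ (c : Euc d) (r : ℝ) (_ : IsAdm a c r),
        ((gaussMeasure d (ball c r))⁻¹ *
            ∫⁻ x in ball c r, ENNReal.ofReal (ν x) ∂gaussMeasure d) ^ (1 / p) *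
          ∏ j : Fin m,
            (if pp j = 1 then
              (essInf (fun x => ENNReal.ofReal (ω j x))
                ((gaussMeasure d).restrict (ball c r)))⁻¹
            else
              ((gaussMeasure d (ball c r))⁻¹ *
                  ∫⁻ x in ball c r,
                    ENNReal.ofReal (ω j x) ^ (1 - conjExp (pp j)) ∂gaussMeasure d) ^
                (1 / conjExp (pp j)))) < ⊤)
    -- (ii) the a-local 5-condition for ν dγ
    (h5 : ∃ C₀ : ℝ≥0∞, C₀ ≠ ⊤ ∧ ∀ (c : Euc d) (r : ℝ), IsAdm a c r →
        (∫⁻ x in ball c (5 * r), ENNReal.ofReal (ν x) ∂gaussMeasure d) ≤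
          C₀ * ∫⁻ x in ball c r, ENNReal.ofReal (ν x) ∂gaussMeasure d) :
    ∃ C : ℝ≥0∞, C ≠ ⊤ ∧ ∀ f : Fin m → Euc d → ℝ,
      (∀ j, LocallyIntegrable (f j) (gaussMeasure d)) →
      weakNorm p ν (multiMax a f) ≤ C * ∏ j : Fin m, gLpNorm (pp j) (ω j) (f j) := by
  obtain ⟨C₀, hC₀_top, hC₀⟩ := h5
  have hp0 : 0 < p := one_div_pos.1 <| hp ▸ Finset.sum_pos
    (fun j _ => one_div_pos.2 (by linarith [hpp j])) ⟨⟨0, hm⟩, Finset.mem_univ _⟩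
  refine ⟨C₀ ^ (1 / p) * _, ENNReal.mul_ne_top (ENNReal.rpow_ne_top_of_nonneg (by positivity)
    hC₀_top) hAp.ne, fun f hf => iSup₂_le fun t _ => ?_⟩
  obtain ⟨u, huT, hu, hdisj, hcover⟩ := exists_countable_disjoint_subfamily_ball
    (setOf_lt_multiMax_subset a f (ENNReal.ofReal t)) fun b hb => ⟨hb.1.1, hb.1.radius_lt.le⟩
  have hweak := mul_measure_rpow_le_of_disjoint_cover
    ((gaussMeasure d).withDensity fun x => ENNReal.ofReal (ν x))
    (fun j => (gaussMeasure d).withDensity fun x =>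
      ENNReal.ofReal |f j x| ^ pp j * ENNReal.ofReal (ω j x))
    (fun j => by linarith [hpp j]) hp0 hp hu (fun _ _ => measurableSet_ball) hdisj
    hcover (C₀ := C₀) (t := ENNReal.ofReal t)
    (fun b hb => by simpa only [withDensity_apply'] using hC₀ _ _ (huT hb).1)
    (fun b hb => by
      simp only [withDensity_apply']
      exact mul_rpow_le_of_le_prod_average
        (gaussMeasure_ball_ne_zero _ (huT hb).1.1) (gaussMeasure_ball_ne_top _ _) hpp hp
        (fun j => (hf j).aestronglyMeasurable.aemeasurable.restrict.abs.ennreal_ofReal)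
        (fun j => (hωloc j).aestronglyMeasurable.aemeasurable.restrict.ennreal_ofReal)
        (fun j => ae_of_all _ fun _ => ENNReal.ofReal_ne_top) hAp.ne
        (le_iSup₂_of_le b.1 b.2 (le_iSup_of_le (huT hb).1 le_rfl)) (huT hb).2.le)
  simpa only [withDensity_apply', Measure.restrict_univ, gLpNorm] using hweak

/-- two-weight weak type estimate for the local multi(sub)linear
Hardy–Littlewood maximal operator on Gaussian measure spaces. -/
theorem stmt0 {d m : ℕ} (hd : 0 < d) (hm : 0 < m) (a : ℝ) (ha : 0 < a)
    (pp : Fin m → ℝ) (hpp : ∀ j, 1 ≤ pp j) (p : ℝ) (hp : 1 / p = ∑ j, 1 / pp j)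
    (ν : Euc d → ℝ) (hν0 : 0 ≤ᵐ[gaussMeasure d] ν)
    (hνloc : LocallyIntegrable ν (gaussMeasure d))
    (ω : Fin m → Euc d → ℝ) (hω0 : ∀ j, 0 ≤ᵐ[gaussMeasure d] ω j)
    (hωloc : ∀ j, LocallyIntegrable (ω j) (gaussMeasure d))
    -- (i) the two-weight condition
    (hAp : (⨆ (c : Euc d) (r : ℝ) (_ : IsAdm a c r),
        ((gaussMeasure d (ball c r))⁻¹ *
            ∫⁻ x in ball c r, ENNReal.ofReal (ν x) ∂gaussMeasure d) ^ (1 / p) *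
          ∏ j : Fin m,
            (if pp j = 1 then
              (essInf (fun x => ENNReal.ofReal (ω j x))
                ((gaussMeasure d).restrict (ball c r)))⁻¹
            else
              ((gaussMeasure d (ball c r))⁻¹ *
                  ∫⁻ x in ball c r,
                    ENNReal.ofReal (ω j x) ^ (1 - conjExp (pp j)) ∂gaussMeasure d) ^
                (1 / conjExp (pp j)))) < ⊤)
    -- (ii) the a-local 5-condition for ν dγ
    (h5 : ∃ C₀ : ℝ≥0∞, C₀ ≠ ⊤ ∧ ∀ (c : Euc d) (r : ℝ), IsAdm a c r →
        (∫⁻ x in ball c (5 * r), ENNReal.ofReal (ν x) ∂gaussMeasure d) ≤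
          C₀ * ∫⁻ x in ball c r, ENNReal.ofReal (ν x) ∂gaussMeasure d) :
    ∃ C : ℝ≥0∞, C ≠ ⊤ ∧ ∀ f : Fin m → Euc d → ℝ,
      (∀ j, LocallyIntegrable (f j) (gaussMeasure d)) →
      weakNorm p ν (multiMax a f) ≤ C * ∏ j : Fin m, gLpNorm (pp j) (ω j) (f j) :=
  stmt0_general hm a pp hpp p hp ν ω hωloc hAp h5
end
end

section
/- Let a>0, m≥1, 1<p_j<∞ for j=1,…,m and 1/p = Σ_{j=1}^m 1/p_j. Let ω_1,…,ω_m be weights and ν a weight that is positive a.e., and suppose there is a constant C such that for every ball B ∈ 𝓑_a and all nonnegative f_1,…,f_m ∈ L¹_loc(γ): ∏_{j=1}^m ((1/γ(B)) ∫_B f_j dγ) · (∫_B ν dγ)^{1/p} ≤ C ∏_{j=1}^m (∫_B f_j^{p_j} ω_j dγ)^{1/p_j}. Then there is a constant C' (depending only on C) such that for all nonnegative f_1,…,f_m ∈ L¹_loc(γ) and all x ∈ ℝ^d: 𝓜_a(f_1,…,f_m)(x) ≤ C' ∏_{j=1}^m [M_{ν,a}(f_j^{p_j} ω_j / ν)(x)]^{1/p_j}.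 -/
open MeasureTheory ENNReal Real Set Metric
open scoped Classical

noncomputable section

/-- The local Hardy–Littlewood maximal operator M_{ν,a} with measure ν dγ. -/
def locMaxMeas {d : ℕ} (a : ℝ) (ν : Euc d → ℝ) (f : Euc d → ℝ) (x : Euc d) : ℝ≥0∞ :=
  ⨆ (c : Euc d) (r : ℝ) (_ : IsAdm a c r) (_ : x ∈ ball c r),
    (∫⁻ y in ball c r, ENNReal.ofReal (ν y) ∂gaussMeasure d)⁻¹ *
      ∫⁻ y in ball c r, ENNReal.ofReal |f y| * ENNReal.ofReal (ν y) ∂gaussMeasure d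

lemma rpow_sum_aux {ι : Type*} (s : Finset ι) {x : ℝ≥0∞} (hx : x ≠ 0) (hx' : x ≠ ⊤)
    (a : ι → ℝ) : ∏ i ∈ s, x ^ a i = x ^ (∑ i ∈ s, a i) := by
  induction s using Finset.cons_induction with
  | empty => simp
  | cons i s hi ih =>
      rw [Finset.prod_cons, Finset.sum_cons, ih, ← ENNReal.rpow_add _ _ hx hx']

/-- the testing inequality implies the pointwise bound of 𝓜_a by
a product of local maximal functions with measure ν dγ. -/
theorem stmt3 {d m : ℕ} (hd : 0 < d) (hm : 0 < m) (a : ℝ) (ha : 0 < a)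
    (pp : Fin m → ℝ) (hpp : ∀ j, 1 < pp j) (p : ℝ) (hp : 1 / p = ∑ j, 1 / pp j)
    (ν : Euc d → ℝ) (hν0 : ∀ᵐ x ∂gaussMeasure d, 0 < ν x)
    (hνloc : LocallyIntegrable ν (gaussMeasure d))
    (ω : Fin m → Euc d → ℝ) (hω0 : ∀ j, 0 ≤ᵐ[gaussMeasure d] ω j)
    (hωloc : ∀ j, LocallyIntegrable (ω j) (gaussMeasure d))
    (C : ℝ≥0∞) (hC : C ≠ ⊤)
    (htest : ∀ (c : Euc d) (r : ℝ), IsAdm a c r →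
      ∀ f : Fin m → Euc d → ℝ, (∀ j, 0 ≤ f j) →
        (∀ j, LocallyIntegrable (f j) (gaussMeasure d)) →
        (∏ j : Fin m, (gaussMeasure d (ball c r))⁻¹ *
            ∫⁻ y in ball c r, ENNReal.ofReal (f j y) ∂gaussMeasure d) *
          (∫⁻ x in ball c r, ENNReal.ofReal (ν x) ∂gaussMeasure d) ^ (1 / p) ≤
        C * ∏ j : Fin m,
          (∫⁻ y in ball c r,
              ENNReal.ofReal (f j y) ^ pp j * ENNReal.ofReal (ω j y) ∂gaussMeasure d) ^
            (1 / pp j)) :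
    ∃ C' : ℝ≥0∞, C' ≠ ⊤ ∧ ∀ f : Fin m → Euc d → ℝ, (∀ j, 0 ≤ f j) →
      (∀ j, LocallyIntegrable (f j) (gaussMeasure d)) →
      ∀ x : Euc d,
        multiMax a f x ≤
          C' * ∏ j : Fin m,
            (locMaxMeas a ν (fun y => f j y ^ pp j * ω j y / ν y) x) ^ (1 / pp j) := by
  classical
  refine ⟨C, hC, ?_⟩
  intro f hf hfloc x
  rw [multiMax]
  refine iSup_le fun c => iSup_le fun r => iSup_le fun hadm => iSup_le fun hx => ?_
  have hr : 0 < r := hadm.1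
  set μ := gaussMeasure d with hμdef
  -- positivity of the gaussian measure of the ball
  have hμB_pos : μ (ball c r) ≠ 0 := by
    rw [hμdef, gaussMeasure, withDensity_apply _ measurableSet_ball]
    intro h0
    have hdm : Measurable fun x : Euc d =>
        ENNReal.ofReal (Real.pi ^ (-(d : ℝ) / 2) * Real.exp (-‖x‖ ^ 2)) := by fun_prop
    rw [lintegral_eq_zero_iff' hdm.aemeasurable] at h0
    have hFalse : ∀ᵐ y ∂(volume.restrict (ball c r)), False := by
      filter_upwards [h0] with y hy
      simp only [Pi.zero_apply, ENNReal.ofReal_eq_zero] at hy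
      have : (0:ℝ) < Real.pi ^ (-(d:ℝ)/2) * Real.exp (-‖y‖^2) := by positivity
      linarith
    rw [Filter.eventually_false_iff_eq_bot, ae_restrict_eq_bot] at hFalse
    exact (measure_ball_pos volume c hr).ne' hFalse
  set νB := ∫⁻ y in ball c r, ENNReal.ofReal (ν y) ∂μ with hνBdef
  have hν0B : ∀ᵐ y ∂(μ.restrict (ball c r)), 0 < ν y := ae_restrict_of_ae hν0
  have hνmeas : AEMeasurable (fun y => ENNReal.ofReal (ν y)) (μ.restrict (ball c r)) :=
    ENNReal.measurable_ofReal.comp_aemeasurable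
      hνloc.aestronglyMeasurable.aemeasurable.restrict
  have hνB_ne0 : νB ≠ 0 := by
    intro h0
    rw [hνBdef, lintegral_eq_zero_iff' hνmeas] at h0
    have hFalse : ∀ᵐ y ∂(μ.restrict (ball c r)), False := by
      filter_upwards [h0, hν0B] with y h1 h2
      simp only [Pi.zero_apply, ENNReal.ofReal_eq_zero] at h1
      linarith
    rw [Filter.eventually_false_iff_eq_bot, ae_restrict_eq_bot] at hFalse
    exact hμB_pos hFalse
  have hνB_top : νB ≠ ⊤ := by
    have h1 : IntegrableOn ν (ball c r) μ :=
      (hνloc.integrableOn_isCompact (isCompact_closedBall c r)).mono_set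
        ball_subset_closedBall
    exact (lt_of_le_of_lt (lintegral_mono fun y => Real.ofReal_le_enorm (ν y)) h1.2).ne
  -- exponents
  have hpj_pos : ∀ j, (0:ℝ) < pp j := fun j => lt_trans one_pos (hpp j)
  have hinv_pos : ∀ j, (0:ℝ) < 1 / pp j := fun j => one_div_pos.mpr (hpj_pos j)
  have hsum_pos : (0:ℝ) < ∑ j, 1 / pp j :=
    Finset.sum_pos (fun j _ => hinv_pos j) ⟨⟨0, hm⟩, Finset.mem_univ _⟩
  have hp_pos : (0:ℝ) < 1 / p := hp ▸ hsum_pos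
  -- the testing inequality
  have key := htest c r hadm f hf hfloc
  -- rewrite |f j| to f j in the goal
  have habs : ∀ j, (∫⁻ y in ball c r, ENNReal.ofReal |f j y| ∂μ) =
      ∫⁻ y in ball c r, ENNReal.ofReal (f j y) ∂μ := fun j =>
    lintegral_congr fun y => by rw [abs_of_nonneg (hf j y)]
  set R : Fin m → ℝ≥0∞ := fun j =>
    ∫⁻ y in ball c r, ENNReal.ofReal (f j y) ^ pp j * ENNReal.ofReal (ω j y) ∂μ with hRdef
  set A : ℝ≥0∞ := ∏ j, (μ (ball c r))⁻¹ * ∫⁻ y in ball c r, ENNReal.ofReal (f j y) ∂μ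
    with hAdef
  have hx1 : νB ^ (1 / p) ≠ 0 :=
    (ENNReal.rpow_pos (pos_iff_ne_zero.mpr hνB_ne0) hνB_top).ne'
  have hx2 : νB ^ (1 / p) ≠ ⊤ := ENNReal.rpow_ne_top_of_nonneg hp_pos.le hνB_top
  have step3 : A ≤ C * ∏ j, (νB⁻¹ * R j) ^ (1 / pp j) := by
    have h1 : A ≤ (C * ∏ j, R j ^ (1 / pp j)) * (νB ^ (1 / p))⁻¹ := by
      rw [← mul_one A, ← ENNReal.mul_inv_cancel hx1 hx2, ← mul_assoc]
      exact mul_le_mul_left key _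
    refine h1.trans_eq ?_
    rw [mul_assoc]
    congr 1
    calc (∏ j, R j ^ (1 / pp j)) * (νB ^ (1 / p))⁻¹
        = (∏ j, (νB⁻¹) ^ (1 / pp j)) * ∏ j, R j ^ (1 / pp j) := by
          rw [rpow_sum_aux Finset.univ (ENNReal.inv_ne_zero.mpr hνB_top)
            (ENNReal.inv_ne_top.mpr hνB_ne0), ← hp, ENNReal.inv_rpow, mul_comm]
      _ = ∏ j, (νB⁻¹ * R j) ^ (1 / pp j) := by
          rw [← Finset.prod_mul_distrib]
          exact Finset.prod_congr rfl fun j _ =>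
            (ENNReal.mul_rpow_of_nonneg _ _ (hinv_pos j).le).symm
  have hRj : ∀ j, R j = ∫⁻ y in ball c r,
      ENNReal.ofReal |f j y ^ pp j * ω j y / ν y| * ENNReal.ofReal (ν y) ∂μ := by
    intro j
    refine lintegral_congr_ae ?_
    filter_upwards [hν0B, ae_restrict_of_ae (hω0 j)] with y hνy hωy
    have hfy := hf j y
    have h1 : (0:ℝ) ≤ f j y ^ pp j * ω j y / ν y :=
      div_nonneg (mul_nonneg (Real.rpow_nonneg hfy _) hωy) hνy.le
    rw [abs_of_nonneg h1, ← ENNReal.ofReal_mul h1, div_mul_cancel₀ _ hνy.ne',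
      ENNReal.ofReal_mul (Real.rpow_nonneg hfy _), ENNReal.ofReal_rpow_of_nonneg hfy (hpj_pos j).le]
  have hloc : ∀ j, νB⁻¹ * (∫⁻ y in ball c r,
      ENNReal.ofReal |f j y ^ pp j * ω j y / ν y| * ENNReal.ofReal (ν y) ∂μ) ≤
      locMaxMeas a ν (fun y => f j y ^ pp j * ω j y / ν y) x := by
    intro j
    rw [locMaxMeas]
    exact le_iSup_of_le c (le_iSup_of_le r (le_iSup_of_le hadm (le_iSup_of_le hx le_rfl)))
  calc (∏ j, (μ (ball c r))⁻¹ * ∫⁻ y in ball c r, ENNReal.ofReal |f j y| ∂μ)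
      = A := by rw [hAdef]; exact Finset.prod_congr rfl fun j _ => by rw [habs j]
    _ ≤ C * ∏ j, (νB⁻¹ * R j) ^ (1 / pp j) := step3
    _ ≤ C * ∏ j, (locMaxMeas a ν (fun y => f j y ^ pp j * ω j y / ν y) x) ^ (1 / pp j) := by
        refine mul_le_mul_right (Finset.prod_le_prod' fun j _ => ?_) C
        rw [hRj j]
        exact ENNReal.rpow_le_rpow (hloc j) (hinv_pos j).le
end
end

section
/- Let a>0, β∈(0,1), m≥1, p_j>1 for j=1,…,m with 1/s = Σ_{j=1}^m 1/p_j, and θ_1,…,θ_m > 0. Then for every collection of bounded compactly supported functions f_1,…,f_m and every x ∈ ℝ^d: |I_{β,θ,m}^a(f_1,…,f_m)(x)| ≤ (∏_{j=1}^m θ_j^{-dβs/p_j}) · ∏_{j=1}^m [I_β^{θ_j a}(|f_j|^{p_j/s})(x)]^{s/p_j}. -/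
open MeasureTheory ENNReal Real Set Metric
open scoped Classical

noncomputable section

/-- The (radial form of the) local fractional integral operator
I_β^a(f)(x) = π^{-d/2} e^{-β|x|²} ∫_{B(0,a m(x))} f(x-y) |y|^{dβ-d} dy. -/
def Ifrac {d : ℕ} (a β : ℝ) (f : Euc d → ℝ) (x : Euc d) : ℝ :=
  Real.pi ^ (-(d : ℝ) / 2) * Real.exp (-β * ‖x‖ ^ 2) *
    ∫ y in ball (0 : Euc d) (a * adm x), f (x - y) * ‖y‖ ^ ((d : ℝ) * β - d)

/-- The local m-linear fractional integral operator
I_{β,θ,m}^a(f₁,…,f_m)(x) = π^{-d/2} e^{-β|x|²} ∫_{B(0,a m(x))} (∏ⱼ fⱼ(x-θⱼy)) |y|^{dβ-d} dy. -/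
def IfracMulti {d m : ℕ} (a β : ℝ) (θ : Fin m → ℝ) (f : Fin m → Euc d → ℝ)
    (x : Euc d) : ℝ :=
  Real.pi ^ (-(d : ℝ) / 2) * Real.exp (-β * ‖x‖ ^ 2) *
    ∫ y in ball (0 : Euc d) (a * adm x),
      (∏ j : Fin m, f j (x - θ j • y)) * ‖y‖ ^ ((d : ℝ) * β - d)

/-!
Since `∑ⱼ s / pⱼ = 1`, the kernel splits as `|y|^{dβ-d} = ∏ⱼ (|y|^{dβ-d})^{s/pⱼ}`, and Hölder's
inequality with exponents `pⱼ / s` bounds the multilinear integral by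
`∏ⱼ (∫_{B(0,R)} |fⱼ(x - θⱼ y)|^{pⱼ/s} |y|^{dβ-d} dy)^{s/pⱼ}`, where `R = a m(x)`.
In the `j`-th factor the substitution `z = θⱼ y` maps `B(0,R)` onto `B(0,θⱼ R)` and produces
the factor `θⱼ^{-dβ}`. Hölder needs the factors to be finite: `|y|^{dβ-d}` is integrable on
balls because `dβ > 0`, and the `fⱼ` are bounded.
-/

open Finset Module

section Exponents

variable {ι : Type*} [Fintype ι] {p : ι → ℝ} {s : ℝ}

lemma pos_of_one_div_eq_sum_one_div [Nonempty ι] (hp : ∀ i, 0 < p i)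
    (hs : 1 / s = ∑ i, 1 / p i) : 0 < s :=
  one_div_pos.mp (hs ▸ sum_pos (fun i _ => one_div_pos.mpr (hp i)) univ_nonempty)

lemma sum_div_eq_one_of_one_div_eq_sum_one_div (hs0 : s ≠ 0) (hs : 1 / s = ∑ i, 1 / p i) :
    ∑ i, s / p i = 1 := by
  simp_rw [div_eq_mul_one_div s (p _), ← mul_sum, ← hs, mul_one_div_cancel hs0]

end Exponents

section Holder

variable {ι : Type*} {s : Finset ι} {t : ι → ℝ}

lemma abs_prod_mul_eq_prod_rpow_inv_mul_rpow (ht : ∀ i ∈ s, 0 < t i) (ht1 : ∑ i ∈ s, t i = 1)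
    (g : ι → ℝ) {w : ℝ} (hw : 0 ≤ w) :
    |(∏ i ∈ s, g i) * w| = ∏ i ∈ s, (|g i| ^ (t i)⁻¹ * w) ^ t i := by
  have hfactor : ∀ i ∈ s, (|g i| ^ (t i)⁻¹ * w) ^ t i = |g i| * w ^ t i := fun i hi => by
    rw [Real.mul_rpow (by positivity) hw, Real.rpow_inv_rpow (abs_nonneg _) (ht i hi).ne']
  rw [prod_congr rfl hfactor, prod_mul_distrib, ← Real.rpow_sum_of_nonneg hw
    (fun i hi => (ht i hi).le), ht1, Real.rpow_one, abs_mul, abs_prod, abs_of_nonneg hw]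

theorem abs_integral_prod_mul_le {α : Type*} [MeasurableSpace α] {μ : Measure α}
    {g : ι → α → ℝ} {w : α → ℝ} (hw : ∀ a, 0 ≤ w a) (ht : ∀ i ∈ s, 0 < t i)
    (ht1 : ∑ i ∈ s, t i = 1) (hint : ∀ i ∈ s, Integrable (fun a => |g i a| ^ (t i)⁻¹ * w a) μ) :
    |∫ a, (∏ i ∈ s, g i a) * w a ∂μ| ≤ ∏ i ∈ s, (∫ a, |g i a| ^ (t i)⁻¹ * w a ∂μ) ^ t i := by
  have hφ : ∀ i a, 0 ≤ |g i a| ^ (t i)⁻¹ * w a := fun i a => by have := hw a; positivity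
  rw [← ENNReal.ofReal_le_ofReal_iff
    (prod_nonneg fun i _ => Real.rpow_nonneg (integral_nonneg (hφ i)) _)]
  calc ENNReal.ofReal |∫ a, (∏ i ∈ s, g i a) * w a ∂μ|
      ≤ ∫⁻ a, ENNReal.ofReal |(∏ i ∈ s, g i a) * w a| ∂μ := by
        simpa only [Real.enorm_eq_ofReal_abs] using
          enorm_integral_le_lintegral_enorm (μ := μ) fun a => (∏ i ∈ s, g i a) * w a
    _ = ∫⁻ a, ∏ i ∈ s, ENNReal.ofReal (|g i a| ^ (t i)⁻¹ * w a) ^ t i ∂μ := by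
        refine lintegral_congr fun a => ?_
        rw [abs_prod_mul_eq_prod_rpow_inv_mul_rpow ht ht1 _ (hw a),
          ENNReal.ofReal_prod_of_nonneg fun i _ => Real.rpow_nonneg (hφ i a) _]
        exact prod_congr rfl fun i hi => (ENNReal.ofReal_rpow_of_nonneg (hφ i a) (ht i hi).le).symm
    _ ≤ ∏ i ∈ s, (∫⁻ a, ENNReal.ofReal (|g i a| ^ (t i)⁻¹ * w a) ∂μ) ^ t i :=
        ENNReal.lintegral_prod_norm_pow_le s
          (fun i hi => (hint i hi).aemeasurable.ennreal_ofReal) ht1 fun i hi => (ht i hi).le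
    _ = ENNReal.ofReal (∏ i ∈ s, (∫ a, |g i a| ^ (t i)⁻¹ * w a ∂μ) ^ t i) := by
        rw [ENNReal.ofReal_prod_of_nonneg fun i _ => Real.rpow_nonneg (integral_nonneg (hφ i)) _]
        refine prod_congr rfl fun i hi => ?_
        rw [← ENNReal.ofReal_rpow_of_nonneg (integral_nonneg (hφ i)) (ht i hi).le,
          ofReal_integral_eq_lintegral_ofReal (hint i hi) (.of_forall (hφ i))]

lemma mul_prod_mul_rpow_of_sum_eq_one (ht1 : ∑ i ∈ s, t i = 1) {C : ℝ} (hC : 0 < C)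
    {A B : ι → ℝ} (hA : ∀ i ∈ s, 0 ≤ A i) (hB : ∀ i ∈ s, 0 ≤ B i) :
    C * ∏ i ∈ s, (A i * B i) ^ t i = (∏ i ∈ s, A i ^ t i) * ∏ i ∈ s, (C * B i) ^ t i := by
  conv_lhs => rw [← Real.rpow_one C, ← ht1, Real.rpow_sum_of_pos hC]
  rw [prod_congr rfl fun i hi => Real.mul_rpow (hA i hi) (hB i hi),
    prod_congr rfl fun i hi => Real.mul_rpow hC.le (hB i hi), prod_mul_distrib, prod_mul_distrib]
  ring

end Holder

section RieszKernel

variable {E : Type*} [NormedAddCommGroup E] [NormedSpace ℝ E] [FiniteDimensional ℝ E]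
  [MeasurableSpace E] [BorelSpace E] (μ : Measure E) [μ.IsAddHaarMeasure]

lemma integrableOn_ball_mul_norm_rpow (hE : 1 ≤ finrank ℝ E) {g : E → ℝ} {M c : ℝ}
    (hc : -(finrank ℝ E : ℝ) < c) (hg : AEStronglyMeasurable g μ) (hM : ∀ y, |g y| ≤ M)
    (r : ℝ) : IntegrableOn (fun y => g y * ‖y‖ ^ c) (ball 0 r) μ := by
  refine integrableOn_ball_of_norm_le_rpow hE (α := -c) (C := M) (by linarith)
    (.of_forall fun y => ?_) (hg.mul (measurable_norm.pow_const c).aestronglyMeasurable)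
  rw [neg_neg, norm_mul, Real.norm_eq_abs, Real.norm_of_nonneg (by positivity)]
  exact mul_le_mul_of_nonneg_right (hM y) (by positivity)

lemma integrableOn_ball_abs_rpow_comp_mul_norm_rpow (hE : 1 ≤ finrank ℝ E) {c : ℝ}
    (hc : -(finrank ℝ E : ℝ) < c) {f : E → ℝ} (hf : Measurable f) (hfb : ∃ M, ∀ y, |f y| ≤ M)
    {q : ℝ} (hq : 0 ≤ q) (x : E) (θ r : ℝ) :
    IntegrableOn (fun y => |f (x - θ • y)| ^ q * ‖y‖ ^ c) (ball 0 r) μ := by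
  obtain ⟨M, hM⟩ := hfb
  refine integrableOn_ball_mul_norm_rpow μ hE hc (M := M ^ q)
    ((hf.comp (measurable_const.sub (measurable_id.const_smul θ))).abs.pow_const
      q).aestronglyMeasurable (fun y => ?_) r
  rw [abs_of_nonneg (Real.rpow_nonneg (abs_nonneg _) _)]
  exact Real.rpow_le_rpow (abs_nonneg _) (hM _) hq

lemma setIntegral_ball_comp_smul_mul_norm_rpow (g : E → ℝ) {θ : ℝ} (hθ : 0 < θ) (r c : ℝ) :
    ∫ y in ball 0 r, g (θ • y) * ‖y‖ ^ c ∂μ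
      = θ ^ (-(finrank ℝ E + c)) * ∫ z in ball 0 (θ * r), g z * ‖z‖ ^ c ∂μ := by
  have hscale : ∀ y : E, g (θ • y) * ‖y‖ ^ c = θ ^ (-c) * (g (θ • y) * ‖θ • y‖ ^ c) := fun y => by
    rw [norm_smul, Real.norm_of_nonneg hθ.le, Real.mul_rpow hθ.le (norm_nonneg _),
      Real.rpow_neg hθ.le]
    field_simp
  simp_rw [hscale]
  rw [integral_const_mul, Measure.setIntegral_comp_smul_of_pos μ (fun z => g z * ‖z‖ ^ c) _ hθ,
    _root_.smul_ball hθ.ne', smul_zero, Real.norm_of_nonneg hθ.le, smul_eq_mul, ← mul_assoc,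
    ← Real.rpow_natCast, ← Real.rpow_neg hθ.le, ← Real.rpow_add hθ, neg_add, add_comm]

end RieszKernel

theorem stmt6_general {d m : ℕ} (hd : 0 < d) (hm : 0 < m) (a : ℝ)
    (β : ℝ) (hβ : β ∈ Ioo (0 : ℝ) 1)
    (pp : Fin m → ℝ) (hpp : ∀ j, 1 < pp j) (s : ℝ) (hs : 1 / s = ∑ j, 1 / pp j)
    (θ : Fin m → ℝ) (hθ : ∀ j, 0 < θ j)
    (f : Fin m → Euc d → ℝ) (hfm : ∀ j, Measurable (f j))
    (hfb : ∀ j, ∃ M : ℝ, ∀ x, |f j x| ≤ M)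
    (x : Euc d) :
    |IfracMulti a β θ f x| ≤
      (∏ j : Fin m, θ j ^ (-(d : ℝ) * β * s / pp j)) *
        ∏ j : Fin m,
          (Ifrac (θ j * a) β (fun y => |f j y| ^ (pp j / s)) x) ^ (s / pp j) := by
  have : Nonempty (Fin m) := ⟨⟨0, hm⟩⟩
  have hpp0 : ∀ j, 0 < pp j := fun j => one_pos.trans (hpp j)
  have hs0 : 0 < s := pos_of_one_div_eq_sum_one_div hpp0 hs
  have ht : ∀ j, 0 < s / pp j := fun j => div_pos hs0 (hpp0 j)
  have ht1 : ∑ j, s / pp j = 1 := sum_div_eq_one_of_one_div_eq_sum_one_div hs0.ne' hs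
  have hdim : finrank ℝ (Euc d) = d := finrank_euclideanSpace_fin
  set C := π ^ (-(d : ℝ) / 2) * exp (-β * ‖x‖ ^ 2)
  set R := a * adm x
  set c := (d : ℝ) * β - d
  have hC : 0 < C := by positivity
  have hE : 1 ≤ finrank ℝ (Euc d) := hdim.symm ▸ hd
  have hc : -(finrank ℝ (Euc d) : ℝ) < c := by
    rw [hdim]; linarith [mul_pos (Nat.cast_pos.mpr hd) hβ.1]
  have hint : ∀ j, IntegrableOn
      (fun y => |f j (x - θ j • y)| ^ (s / pp j)⁻¹ * ‖y‖ ^ c) (ball 0 R) := fun j =>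
    integrableOn_ball_abs_rpow_comp_mul_norm_rpow volume hE hc (hfm j) (hfb j)
      (inv_pos.mpr (ht j)).le x (θ j) R
  calc |IfracMulti a β θ f x| = C * |∫ y in ball 0 R, (∏ j, f j (x - θ j • y)) * ‖y‖ ^ c| := by
        rw [IfracMulti, abs_mul, abs_of_pos hC]
    _ ≤ C * ∏ j, (∫ y in ball 0 R, |f j (x - θ j • y)| ^ (pp j / s) * ‖y‖ ^ c) ^ (s / pp j) := by
        gcongr
        simpa only [inv_div] using
          abs_integral_prod_mul_le (fun y => by positivity) (fun j _ => ht j) ht1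
            fun j _ => hint j
    _ = C * ∏ j, (θ j ^ (-(d * β)) *
          ∫ z in ball 0 (θ j * R), |f j (x - z)| ^ (pp j / s) * ‖z‖ ^ c) ^ (s / pp j) := by
        congr 1
        refine prod_congr rfl fun j _ => ?_
        rw [setIntegral_ball_comp_smul_mul_norm_rpow volume (fun z => |f j (x - z)| ^ (pp j / s))
          (hθ j), hdim]
        congr 3
        ring
    _ = _ := by
        rw [mul_prod_mul_rpow_of_sum_eq_one ht1 hC (fun j _ => Real.rpow_nonneg (hθ j).le _)
          fun j _ => integral_nonneg fun z => by positivity]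
        congr 1
        · refine prod_congr rfl fun j _ => ?_
          rw [← Real.rpow_mul (hθ j).le]
          ring_nf
        · refine prod_congr rfl fun j _ => ?_
          rw [Ifrac, mul_assoc (θ j) a]

/-- pointwise bound of the local multilinear fractional integral by a product
of local fractional integrals. -/
theorem stmt6 {d m : ℕ} (hd : 0 < d) (hm : 0 < m) (a : ℝ) (ha : 0 < a)
    (β : ℝ) (hβ : β ∈ Ioo (0 : ℝ) 1)
    (pp : Fin m → ℝ) (hpp : ∀ j, 1 < pp j) (s : ℝ) (hs : 1 / s = ∑ j, 1 / pp j)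
    (θ : Fin m → ℝ) (hθ : ∀ j, 0 < θ j)
    (f : Fin m → Euc d → ℝ) (hfm : ∀ j, Measurable (f j))
    (hfc : ∀ j, HasCompactSupport (f j)) (hfb : ∀ j, ∃ M : ℝ, ∀ x, |f j x| ≤ M)
    (x : Euc d) :
    |IfracMulti a β θ f x| ≤
      (∏ j : Fin m, θ j ^ (-(d : ℝ) * β * s / pp j)) *
        ∏ j : Fin m,
          (Ifrac (θ j * a) β (fun y => |f j y| ^ (pp j / s)) x) ^ (s / pp j) :=
  stmt6_general hd hm a β hβ pp hpp s hs θ hθ f hfm hfb x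
end
end

section
/- Let a>0, β∈(0,1) and ε>0 with 0 < β−ε < β+ε < 1. Let Ω : ℝ^d → ℝ be homogeneous of degree 0 (Ω(tx) = Ω(x) for all t>0, x≠0) with ∫_{S^{d-1}} |Ω|^s dσ < ∞ for some s>1. Then there is a constant C = C(ε,β,d,a) such that for all f ∈ L¹_loc(γ) and all x ∈ ℝ^d: |I_{Ω,β}^a(f)(x)| ≤ C [M_{Ω,β+ε}^{2a}(f)(x)]^{1/2} · [M_{Ω,β−ε}^{2a}(f)(x)]^{1/2}. -/
open MeasureTheory ENNReal Real Set Metric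
open scoped Classical

noncomputable section

/-- The surface measure σ on the unit sphere S^{d-1}. -/
def sphereMeasure (d : ℕ) : Measure (sphere (0 : Euc d) 1) :=
  (volume : Measure (Euc d)).toSphere

/-- The local fractional maximal operator with rough kernel Ω:
M_{Ω,β}^a(f)(x) = sup_{B∈𝓑_a(x)} γ(B)^{β-1} ∫_B |Ω(x-y)||f(y)| dγ(y). -/
def roughMax {d : ℕ} (a β : ℝ) (Ω f : Euc d → ℝ) (x : Euc d) : ℝ≥0∞ :=
  ⨆ (c : Euc d) (r : ℝ) (_ : IsAdm a c r) (_ : x ∈ ball c r),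
    (gaussMeasure d (ball c r)) ^ (β - 1) *
      ∫⁻ y in ball c r, ENNReal.ofReal |Ω (x - y)| * ENNReal.ofReal |f y| ∂gaussMeasure d

/-- The local fractional integral operator with rough kernel Ω:
I_{Ω,β}^a(f)(x) = ∫_{B(x,a m(x))} Ω(x-y) f(y) γ(B(x,|x-y|))^{β-1} dγ(y). -/
def roughIfrac {d : ℕ} (a β : ℝ) (Ω f : Euc d → ℝ) (x : Euc d) : ℝ :=
  ∫ y in ball x (a * adm x),
    Ω (x - y) * f y * ((gaussMeasure d (ball x ‖x - y‖)).toReal) ^ (β - 1) ∂gaussMeasure d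

/-!
Split `B(x, a m(x))` into the dyadic annuli `B(x, r_k) \ B(x, r_k / 2)`, `r_k = a m(x) 2^{-k}`.
Admissible balls centred at `x` have Gaussian measure comparable to `w(r) = r^d e^{-|x|^2}`, so on
the `k`-th annulus the kernel `γ(B(x,|x-y|))^{β-1}` is at most `γ(B(x, r_k / 2))^{β-1}`, and testing
the maximal functions on `B(x, r_k)` bounds the `k`-th term both by `w(r_k)^{-ε} M_{β+ε}` and by
`w(r_k)^{ε} M_{β-ε}`. Since `w(r_k)` decreases geometrically, the smaller of the two bounds
(Hedberg's trick) decays geometrically away from the index where they agree, and the series sums to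
`≲ (M_{β+ε} M_{β-ε})^{1/2}`.
-/

open Filter Topology

theorem ENNReal.rpow_le_rpow_of_nonpos {x y : ℝ≥0∞} {z : ℝ} (hxy : x ≤ y) (hz : z ≤ 0) :
    y ^ z ≤ x ^ z := by
  rw [← neg_neg z, ENNReal.rpow_neg y, ENNReal.rpow_neg x]
  exact ENNReal.inv_le_inv.2 (ENNReal.rpow_le_rpow hxy (neg_nonneg.2 hz))

/-- Not an equality: at `x = 0` and `x = ⊤` the real power on the left takes junk values. -/
theorem ENNReal.ofReal_toReal_rpow_le (x : ℝ≥0∞) (z : ℝ) :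
    ENNReal.ofReal (x.toReal ^ z) ≤ x ^ z := by
  rw [ENNReal.toReal_rpow]
  exact ENNReal.ofReal_toReal_le

theorem ENNReal.rpow_mul_rpow_le_ofReal {S T : ℝ≥0∞} {A B s t : ℝ} (hA : 0 < A) (hB : 0 ≤ B)
    (hS : ENNReal.ofReal A ≤ S) (hT : T ≤ ENNReal.ofReal B) (hs : s ≤ 0) (ht : 0 ≤ t) :
    S ^ s * T ^ t ≤ ENNReal.ofReal (A ^ s * B ^ t) := by
  rw [ENNReal.ofReal_mul (rpow_nonneg hA.le s), ← ENNReal.ofReal_rpow_of_pos hA,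
    ← ENNReal.ofReal_rpow_of_nonneg hB ht]
  exact mul_le_mul' (ENNReal.rpow_le_rpow_of_nonpos hS hs) (ENNReal.rpow_le_rpow hT ht)

theorem ENNReal.tsum_pow_dist_le {P : ℝ≥0∞} (hP : P ≤ 1) (n : ℕ) :
    ∑' k, P ^ Nat.dist n k ≤ 2 * (1 - P)⁻¹ := by
  have hhead : ∑ k ∈ Finset.range n, P ^ Nat.dist n k ≤ ∑' j, P ^ j :=
    calc ∑ k ∈ Finset.range n, P ^ Nat.dist n k
        ≤ ∑ k ∈ Finset.range n, P ^ (n - 1 - k) := by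
          refine Finset.sum_le_sum fun k hk => pow_le_pow_right_of_le_one' hP ?_
          rw [Nat.dist_eq_sub_of_le_right (Finset.mem_range.1 hk).le]
          omega
      _ = ∑ k ∈ Finset.range n, P ^ k := Finset.sum_range_reflect (P ^ ·) n
      _ ≤ ∑' j, P ^ j := ENNReal.sum_le_tsum _
  have htail : ∀ j, Nat.dist n (j + n) = j := fun j => by
    rw [Nat.dist_eq_sub_of_le (Nat.le_add_left n j), Nat.add_sub_cancel]
  rw [← ENNReal.summable.sum_add_tsum_nat_add' (k := n), two_mul, ← ENNReal.tsum_geometric]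
  simp only [htail]
  gcongr

theorem Nat.cast_dist_floor_le_abs_sub_add_one (κ : ℝ) (k : ℕ) :
    (Nat.dist ⌊κ⌋₊ k : ℝ) ≤ |k - κ| + 1 := by
  rcases le_total ⌊κ⌋₊ k with h | h
  · rw [Nat.dist_eq_sub_of_le h, Nat.cast_sub h]
    linarith [le_abs_self ((k : ℝ) - κ), Nat.lt_floor_add_one κ]
  · rw [Nat.dist_eq_sub_of_le_right h, Nat.cast_sub h]
    rcases le_or_gt 0 κ with hκ | hκ
    · linarith [neg_abs_le ((k : ℝ) - κ), Nat.floor_le hκ]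
    · rw [Nat.floor_eq_zero.2 (by linarith), Nat.cast_zero]
      linarith [abs_nonneg ((k : ℝ) - κ), k.cast_nonneg (α := ℝ)]

theorem tsum_ofReal_exp_neg_abs_le {θ : ℝ} (hθ : 0 < θ) (c : ℝ) :
    ∑' k : ℕ, ENNReal.ofReal (exp (-|c + θ * k|)) ≤
      ENNReal.ofReal (exp θ) * (2 * (1 - ENNReal.ofReal (exp (-θ)))⁻¹) := by
  set n := ⌊-c / θ⌋₊
  have hterm : ∀ k : ℕ, ENNReal.ofReal (exp (-|c + θ * k|)) ≤
      ENNReal.ofReal (exp θ) * ENNReal.ofReal (exp (-θ)) ^ Nat.dist n k := by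
    intro k
    rw [← ENNReal.ofReal_pow (exp_pos _).le, ← ENNReal.ofReal_mul (exp_pos _).le, ← exp_nat_mul,
      ← exp_add]
    refine ENNReal.ofReal_le_ofReal (exp_le_exp.2 ?_)
    have hscale : c + θ * k = θ * (k - -c / θ) := by field_simp; ring
    rw [hscale, abs_mul, abs_of_pos hθ]
    nlinarith [Nat.cast_dist_floor_le_abs_sub_add_one (-c / θ) k]
  calc ∑' k : ℕ, ENNReal.ofReal (exp (-|c + θ * k|))
      ≤ ∑' k : ℕ, ENNReal.ofReal (exp θ) * ENNReal.ofReal (exp (-θ)) ^ Nat.dist n k :=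
        ENNReal.tsum_le_tsum hterm
    _ ≤ _ := by
        rw [ENNReal.tsum_mul_left]
        gcongr
        exact ENNReal.tsum_pow_dist_le (ENNReal.ofReal_le_one.2 (exp_le_one_iff.2 (by linarith))) n

theorem min_mul_exp_le {x y : ℝ} (hx : 0 < x) (hy : 0 < y) (t : ℝ) :
    min (x * exp t) (y * exp (-t)) ≤
      x ^ (1 / 2 : ℝ) * y ^ (1 / 2 : ℝ) * exp (-|t - (log y - log x) / 2|) := by
  rw [rpow_def_of_pos hx, rpow_def_of_pos hy, ← exp_add, ← exp_add]
  nth_rewrite 1 [← exp_log hx, ← exp_log hy]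
  rw [← exp_add, ← exp_add]
  rcases abs_choice (t - (log y - log x) / 2) with h | h <;> rw [h]
  · exact min_le_of_right_le (exp_le_exp.2 (by linarith))
  · exact min_le_of_left_le (exp_le_exp.2 (by linarith))

theorem tsum_le_of_le_exp_of_le_exp_neg {θ : ℝ} (hθ : 0 < θ) (c : ℝ) {u : ℕ → ℝ≥0∞}
    {X Y : ℝ≥0∞} (hX : ∀ k : ℕ, u k ≤ X * ENNReal.ofReal (exp (c + θ * k)))
    (hY : ∀ k : ℕ, u k ≤ Y * ENNReal.ofReal (exp (-(c + θ * k)))) :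
    ∑' k, u k ≤ ENNReal.ofReal (exp θ) * (2 * (1 - ENNReal.ofReal (exp (-θ)))⁻¹) *
      X ^ (1 / 2 : ℝ) * Y ^ (1 / 2 : ℝ) := by
  rcases eq_or_ne X 0 with rfl | hX0
  · simp_all
  rcases eq_or_ne Y 0 with rfl | hY0
  · simp_all
  have hC0 : ENNReal.ofReal (exp θ) * (2 * (1 - ENNReal.ofReal (exp (-θ)))⁻¹) ≠ 0 := by
    simp [exp_pos]
  rcases eq_or_ne X ⊤ with rfl | hXtop
  · simp [hC0, hY0]
  rcases eq_or_ne Y ⊤ with rfl | hYtop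
  · simp [hC0, hX0]
  obtain ⟨x, hx, rfl⟩ : ∃ x : ℝ, 0 < x ∧ ENNReal.ofReal x = X :=
    ⟨X.toReal, ENNReal.toReal_pos hX0 hXtop, ENNReal.ofReal_toReal hXtop⟩
  obtain ⟨y, hy, rfl⟩ : ∃ y : ℝ, 0 < y ∧ ENNReal.ofReal y = Y :=
    ⟨Y.toReal, ENNReal.toReal_pos hY0 hYtop, ENNReal.ofReal_toReal hYtop⟩
  set c' := c - (log y - log x) / 2 with hc'
  have hterm : ∀ k : ℕ, u k ≤ ENNReal.ofReal (x ^ (1 / 2 : ℝ) * y ^ (1 / 2 : ℝ)) *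
      ENNReal.ofReal (exp (-|c' + θ * k|)) := by
    intro k
    rw [← ENNReal.ofReal_mul (by positivity)]
    calc u k ≤ min (ENNReal.ofReal x * ENNReal.ofReal (exp (c + θ * k)))
          (ENNReal.ofReal y * ENNReal.ofReal (exp (-(c + θ * k)))) := le_min (hX k) (hY k)
      _ = ENNReal.ofReal (min (x * exp (c + θ * k)) (y * exp (-(c + θ * k)))) := by
          rw [ENNReal.ofReal_min, ENNReal.ofReal_mul hx.le, ENNReal.ofReal_mul hy.le]
      _ ≤ _ := by
          refine ENNReal.ofReal_le_ofReal ((min_mul_exp_le hx hy _).trans_eq ?_)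
          rw [hc']
          ring_nf
  calc ∑' k, u k ≤ ∑' k : ℕ, ENNReal.ofReal (x ^ (1 / 2 : ℝ) * y ^ (1 / 2 : ℝ)) *
        ENNReal.ofReal (exp (-|c' + θ * k|)) := ENNReal.tsum_le_tsum hterm
    _ ≤ ENNReal.ofReal (x ^ (1 / 2 : ℝ) * y ^ (1 / 2 : ℝ)) *
        (ENNReal.ofReal (exp θ) * (2 * (1 - ENNReal.ofReal (exp (-θ)))⁻¹)) := by
        rw [ENNReal.tsum_mul_left]
        gcongr
        exact tsum_ofReal_exp_neg_abs_le hθ c'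
    _ = _ := by
        rw [ENNReal.ofReal_mul (by positivity), ENNReal.ofReal_rpow_of_pos hx,
          ENNReal.ofReal_rpow_of_pos hy]
        ring

theorem exists_tsum_le_of_le_geometric_rpow {q ε : ℝ} (hq0 : 0 < q) (hq1 : q < 1) (hε : 0 < ε) :
    ∃ C : ℝ≥0∞, C ≠ ⊤ ∧ ∀ w₀ : ℝ, 0 < w₀ → ∀ (u : ℕ → ℝ≥0∞) (X Y : ℝ≥0∞),
      (∀ k, u k ≤ X * ENNReal.ofReal ((w₀ * q ^ k) ^ (-ε))) →
      (∀ k, u k ≤ Y * ENNReal.ofReal ((w₀ * q ^ k) ^ ε)) →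
      ∑' k, u k ≤ C * X ^ (1 / 2 : ℝ) * Y ^ (1 / 2 : ℝ) := by
  set θ := -ε * log q with hθ_def
  have hθ : 0 < θ := by have := log_neg hq0 hq1; nlinarith
  refine ⟨ENNReal.ofReal (exp θ) * (2 * (1 - ENNReal.ofReal (exp (-θ)))⁻¹), ?_,
    fun w₀ hw₀ u X Y hX hY => ?_⟩
  · refine ENNReal.mul_ne_top ENNReal.ofReal_ne_top (ENNReal.mul_ne_top ENNReal.ofNat_ne_top ?_)
    exact ENNReal.inv_ne_top.2 (tsub_pos_of_lt (ENNReal.ofReal_lt_one.2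
      (exp_lt_one_iff.2 (neg_lt_zero.2 hθ)))).ne'
  have hexp : ∀ (t : ℝ) (k : ℕ), (w₀ * q ^ k) ^ t = exp (t * log w₀ + t * log q * k) := by
    intro t k
    rw [rpow_def_of_pos (by positivity), Real.log_mul hw₀.ne' (by positivity), Real.log_pow]
    ring_nf
  refine tsum_le_of_le_exp_of_le_exp_neg hθ (-ε * log w₀) (fun k => ?_) (fun k => ?_)
  · simpa only [hexp] using hX k
  · convert hY k using 4
    rw [hexp, hθ_def]
    ring_nf

theorem exists_succ_le_lt_of_tendsto_zero {r : ℕ → ℝ} (hr : Tendsto r atTop (𝓝 0)) {t : ℝ}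
    (ht : 0 < t) (htr : t < r 0) : ∃ k, r (k + 1) ≤ t ∧ t < r k := by
  have hex : ∃ n, r n ≤ t := (hr.eventually (eventually_le_nhds ht)).exists
  have hn0 : Nat.find hex ≠ 0 := fun h => (Nat.find_spec hex).not_gt (h ▸ htr)
  refine ⟨Nat.find hex - 1, ?_, not_le.1 (Nat.find_min hex (by omega))⟩
  rw [Nat.sub_add_cancel (Nat.one_le_iff_ne_zero.2 hn0)]
  exact Nat.find_spec hex

theorem lintegral_ball_le_tsum_annulus {X : Type*} [MetricSpace X] [MeasurableSpace X]
    (μ : Measure X) {x : X} (hx : μ {x} = 0) {r : ℕ → ℝ} (hr : Tendsto r atTop (𝓝 0))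
    (g : X → ℝ≥0∞) :
    ∫⁻ y in ball x (r 0), g y ∂μ ≤ ∑' k, ∫⁻ y in ball x (r k) \ ball x (r (k + 1)), g y ∂μ := by
  have hcover : ball x (r 0) ⊆ {x} ∪ ⋃ k, ball x (r k) \ ball x (r (k + 1)) := by
    intro y hy
    rcases eq_or_ne y x with rfl | hyx
    · exact Or.inl rfl
    obtain ⟨k, hk, hk'⟩ := exists_succ_le_lt_of_tendsto_zero hr (dist_pos.2 hyx) hy
    exact Or.inr (mem_iUnion.2 ⟨k, hk', fun h => (mem_ball.1 h).not_ge hk⟩)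
  calc ∫⁻ y in ball x (r 0), g y ∂μ
      ≤ ∫⁻ y in {x} ∪ ⋃ k, ball x (r k) \ ball x (r (k + 1)), g y ∂μ := lintegral_mono_set hcover
    _ ≤ ∫⁻ y in {x}, g y ∂μ + ∫⁻ y in ⋃ k, ball x (r k) \ ball x (r (k + 1)), g y ∂μ :=
        lintegral_union_le _ _ _
    _ ≤ 0 + ∑' k, ∫⁻ y in ball x (r k) \ ball x (r (k + 1)), g y ∂μ :=
        add_le_add (setLIntegral_measure_zero _ _ hx).le (lintegral_iUnion_le _ _)
    _ = _ := zero_add _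

theorem setLIntegral_annulus_mul_rpow_le {E : Type*} [SeminormedAddCommGroup E] [MeasurableSpace E]
    [OpensMeasurableSpace E] (μ : Measure E) {β : ℝ} (hβ : β ≤ 1) (x : E) {r r' : ℝ}
    (hr' : μ (ball x r') ≠ 0) (g : E → ℝ≥0∞) :
    ∫⁻ y in ball x r \ ball x r', g y * μ (ball x ‖x - y‖) ^ (β - 1) ∂μ ≤
      μ (ball x r') ^ (β - 1) * ∫⁻ y in ball x r, g y ∂μ := by
  have hne : μ (ball x r') ^ (β - 1) ≠ ⊤ := by
    simp [ENNReal.rpow_eq_top_iff, hr', hβ]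
  have hle : ∀ y ∈ ball x r \ ball x r', g y * μ (ball x ‖x - y‖) ^ (β - 1) ≤
      μ (ball x r') ^ (β - 1) * g y := by
    rintro y ⟨-, hy⟩
    rw [mem_ball, not_lt, dist_eq_norm, norm_sub_rev] at hy
    rw [mul_comm]
    exact mul_le_mul' (ENNReal.rpow_le_rpow_of_nonpos (measure_mono (ball_subset_ball hy))
      (by linarith)) le_rfl
  calc ∫⁻ y in ball x r \ ball x r', g y * μ (ball x ‖x - y‖) ^ (β - 1) ∂μ
      ≤ ∫⁻ y in ball x r \ ball x r', μ (ball x r') ^ (β - 1) * g y ∂μ :=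
        setLIntegral_mono' (measurableSet_ball.diff measurableSet_ball) hle
    _ = μ (ball x r') ^ (β - 1) * ∫⁻ y in ball x r \ ball x r', g y ∂μ :=
        lintegral_const_mul' _ _ hne
    _ ≤ _ := by gcongr; exact sdiff_subset

theorem adm_pos {d : ℕ} (x : Euc d) : 0 < adm x := by
  unfold adm
  split_ifs with h
  exacts [one_pos, inv_pos.2 (by linarith)]

theorem adm_le_one {d : ℕ} (x : Euc d) : adm x ≤ 1 := by
  unfold adm
  split_ifs with h
  exacts [le_rfl, inv_le_one_of_one_le₀ (by linarith)]

theorem adm_mul_norm_le_one {d : ℕ} (x : Euc d) : adm x * ‖x‖ ≤ 1 := by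
  unfold adm
  split_ifs with h
  · linarith
  · rw [inv_mul_cancel₀ (by linarith)]

theorem abs_sq_norm_sub_sq_norm_le {E : Type*} [SeminormedAddCommGroup E] {x y : E} {r : ℝ}
    (hy : y ∈ ball x r) : |‖y‖ ^ 2 - ‖x‖ ^ 2| ≤ r * (2 * ‖x‖ + r) := by
  have hyx : ‖y - x‖ < r := mem_ball_iff_norm.1 hy
  have h1 : |‖y‖ - ‖x‖| ≤ r := (abs_norm_sub_norm_le y x).trans hyx.le
  have h2 : ‖y‖ + ‖x‖ ≤ 2 * ‖x‖ + r := by linarith [(abs_le.1 h1).2]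
  rw [sq_sub_sq, abs_mul, abs_of_nonneg (by positivity : 0 ≤ ‖y‖ + ‖x‖), mul_comm]
  exact mul_le_mul h1 h2 (by positivity) ((abs_nonneg _).trans h1)

theorem gaussMeasure_apply {d : ℕ} {s : Set (Euc d)} (hs : MeasurableSet s) :
    gaussMeasure d s = ∫⁻ y in s, ENNReal.ofReal (π ^ (-(d : ℝ) / 2) * exp (-‖y‖ ^ 2)) :=
  withDensity_apply _ hs

theorem ofReal_mul_volume_le_gaussMeasure {d : ℕ} {s : Set (Euc d)} (hs : MeasurableSet s) {m : ℝ}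
    (hm : ∀ y ∈ s, m ≤ exp (-‖y‖ ^ 2)) :
    ENNReal.ofReal (π ^ (-(d : ℝ) / 2) * m) * volume s ≤ gaussMeasure d s := by
  rw [gaussMeasure_apply hs, ← setLIntegral_const]
  exact setLIntegral_mono' hs fun y hy => ENNReal.ofReal_le_ofReal (by gcongr; exact hm y hy)

theorem gaussMeasure_le_ofReal_mul_volume {d : ℕ} {s : Set (Euc d)} (hs : MeasurableSet s) {M : ℝ}
    (hM : ∀ y ∈ s, exp (-‖y‖ ^ 2) ≤ M) :
    gaussMeasure d s ≤ ENNReal.ofReal (π ^ (-(d : ℝ) / 2) * M) * volume s := by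
  rw [gaussMeasure_apply hs, ← setLIntegral_const]
  exact setLIntegral_mono' hs fun y hy => ENNReal.ofReal_le_ofReal (by gcongr; exact hM y hy)

theorem gaussMeasure_ball_comparable (d : ℕ) {a : ℝ} (ha : 0 ≤ a) :
    ∃ c₁ c₂ : ℝ, 0 < c₁ ∧ 0 < c₂ ∧ ∀ (x : Euc d) (r : ℝ), 0 < r → r ≤ a * adm x →
      ENNReal.ofReal (c₁ * r ^ d * exp (-‖x‖ ^ 2)) ≤ gaussMeasure d (ball x r) ∧
      gaussMeasure d (ball x r) ≤ ENNReal.ofReal (c₂ * r ^ d * exp (-‖x‖ ^ 2)) := by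
  set K := a * (2 + a)
  set v := (volume (ball (0 : Euc d) 1)).toReal
  have hv : 0 < v := ENNReal.toReal_pos (measure_ball_pos volume 0 one_pos).ne'
    measure_ball_lt_top.ne
  refine ⟨π ^ (-(d : ℝ) / 2) * exp (-K) * v, π ^ (-(d : ℝ) / 2) * exp K * v, by positivity,
    by positivity, fun x r hr hrx => ?_⟩
  have hnear : ∀ y ∈ ball x r, |‖y‖ ^ 2 - ‖x‖ ^ 2| ≤ K := by
    intro y hy
    have hra : r ≤ a := hrx.trans (by nlinarith [adm_le_one x])
    have hrxa : r * ‖x‖ ≤ a := by nlinarith [adm_mul_norm_le_one x, norm_nonneg x]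
    exact (abs_sq_norm_sub_sq_norm_le hy).trans (by nlinarith)
  have hvol : volume (ball x r) = ENNReal.ofReal (r ^ d) * ENNReal.ofReal v := by
    rw [Measure.addHaar_ball_of_pos volume x hr, finrank_euclideanSpace_fin,
      ENNReal.ofReal_toReal measure_ball_lt_top.ne]
  constructor
  · calc ENNReal.ofReal (π ^ (-(d : ℝ) / 2) * exp (-K) * v * r ^ d * exp (-‖x‖ ^ 2))
        = ENNReal.ofReal (π ^ (-(d : ℝ) / 2) * exp (-K - ‖x‖ ^ 2)) * volume (ball x r) := by
          rw [hvol, ← ENNReal.ofReal_mul (by positivity), ← ENNReal.ofReal_mul (by positivity),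
            sub_eq_add_neg, exp_add]
          ring_nf
      _ ≤ _ := ofReal_mul_volume_le_gaussMeasure measurableSet_ball fun y hy =>
          exp_le_exp.2 (by linarith [(abs_le.1 (hnear y hy)).2])
  · calc gaussMeasure d (ball x r)
        ≤ ENNReal.ofReal (π ^ (-(d : ℝ) / 2) * exp (K - ‖x‖ ^ 2)) * volume (ball x r) :=
          gaussMeasure_le_ofReal_mul_volume measurableSet_ball fun y hy =>
            exp_le_exp.2 (by linarith [(abs_le.1 (hnear y hy)).1])
      _ = _ := by
          rw [hvol, ← ENNReal.ofReal_mul (by positivity), ← ENNReal.ofReal_mul (by positivity),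
            sub_eq_add_neg, exp_add]
          ring_nf

theorem gaussMeasure_absolutelyContinuous (d : ℕ) : gaussMeasure d ≪ volume :=
  withDensity_absolutelyContinuous _ _

theorem ofReal_abs_roughIfrac_le {d : ℕ} (a β : ℝ) (Ω f : Euc d → ℝ) (x : Euc d) :
    ENNReal.ofReal |roughIfrac a β Ω f x| ≤
      ∫⁻ y in ball x (a * adm x), ENNReal.ofReal |Ω (x - y)| * ENNReal.ofReal |f y| *
        gaussMeasure d (ball x ‖x - y‖) ^ (β - 1) ∂gaussMeasure d := by
  rw [← Real.enorm_eq_ofReal_abs]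
  refine (enorm_integral_le_lintegral_enorm _).trans (lintegral_mono fun y => ?_)
  rw [enorm_mul, enorm_mul, Real.enorm_eq_ofReal_abs, Real.enorm_eq_ofReal_abs,
    Real.enorm_of_nonneg (rpow_nonneg ENNReal.toReal_nonneg _)]
  gcongr
  exact ENNReal.ofReal_toReal_rpow_le _ _

theorem le_roughMax {d : ℕ} {a β r : ℝ} {c x : Euc d} (Ω f : Euc d → ℝ) (hB : IsAdm a c r)
    (hx : x ∈ ball c r) :
    gaussMeasure d (ball c r) ^ (β - 1) *
      ∫⁻ y in ball c r, ENNReal.ofReal |Ω (x - y)| * ENNReal.ofReal |f y| ∂gaussMeasure d ≤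
      roughMax a β Ω f x :=
  le_iSup₂_of_le c r (le_iSup₂_of_le hB hx le_rfl)

theorem lintegral_ball_le_rpow_mul_roughMax {d : ℕ} {a β r : ℝ} {x : Euc d} (Ω f : Euc d → ℝ)
    (hr : IsAdm a x r) (h0 : gaussMeasure d (ball x r) ≠ 0) (htop : gaussMeasure d (ball x r) ≠ ⊤) :
    ∫⁻ y in ball x r, ENNReal.ofReal |Ω (x - y)| * ENNReal.ofReal |f y| ∂gaussMeasure d ≤
      gaussMeasure d (ball x r) ^ (1 - β) * roughMax a β Ω f x := by
  calc ∫⁻ y in ball x r, ENNReal.ofReal |Ω (x - y)| * ENNReal.ofReal |f y| ∂gaussMeasure d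
      = gaussMeasure d (ball x r) ^ (1 - β) * (gaussMeasure d (ball x r) ^ (β - 1) *
          ∫⁻ y in ball x r, ENNReal.ofReal |Ω (x - y)| * ENNReal.ofReal |f y| ∂gaussMeasure d) := by
        rw [← mul_assoc, ← ENNReal.rpow_add _ _ h0 htop, sub_add_sub_cancel', sub_self,
          ENNReal.rpow_zero, one_mul]
    _ ≤ _ := by gcongr; exact le_roughMax Ω f hr (mem_ball_self hr.1)

theorem setLIntegral_annulus_le {d : ℕ} {a β δ c₁ c₂ : ℝ} (hβ : β ≤ 1) (hδ : δ ≤ 1)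
    (hc₁ : 0 < c₁) (hc₂ : 0 < c₂) {x : Euc d}
    (hγ : ∀ r, 0 < r → r ≤ a * adm x →
      ENNReal.ofReal (c₁ * r ^ d * exp (-‖x‖ ^ 2)) ≤ gaussMeasure d (ball x r) ∧
      gaussMeasure d (ball x r) ≤ ENNReal.ofReal (c₂ * r ^ d * exp (-‖x‖ ^ 2)))
    (Ω f : Euc d → ℝ) {r : ℝ} (hr : 0 < r) (hrx : r ≤ a * adm x) :
    ∫⁻ y in ball x r \ ball x (r / 2), ENNReal.ofReal |Ω (x - y)| * ENNReal.ofReal |f y| *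
        gaussMeasure d (ball x ‖x - y‖) ^ (β - 1) ∂gaussMeasure d ≤
      ENNReal.ofReal ((c₁ / 2 ^ d) ^ (β - 1) * c₂ ^ (1 - δ)) * roughMax (2 * a) δ Ω f x *
        ENNReal.ofReal ((r ^ d * exp (-‖x‖ ^ 2)) ^ (β - δ)) := by
  set w := r ^ d * exp (-‖x‖ ^ 2) with hw_def
  have hw : 0 < w := by positivity
  obtain ⟨hlo', -⟩ := hγ (r / 2) (half_pos hr) (by linarith)
  obtain ⟨hlo, hhi⟩ := hγ r hr hrx
  have hpos : ∀ {s : ℝ}, 0 < s → 0 < c₁ * s ^ d * exp (-‖x‖ ^ 2) := fun hs => by positivity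
  have hadm : IsAdm (2 * a) x r := ⟨hr, hrx.trans_lt (by nlinarith [adm_pos x])⟩
  have hK : (c₁ * (r / 2) ^ d * exp (-‖x‖ ^ 2)) ^ (β - 1) * (c₂ * r ^ d * exp (-‖x‖ ^ 2)) ^ (1 - δ)
      = (c₁ / 2 ^ d) ^ (β - 1) * c₂ ^ (1 - δ) * w ^ (β - δ) := by
    rw [show c₁ * (r / 2) ^ d * exp (-‖x‖ ^ 2) = c₁ / 2 ^ d * w by rw [hw_def, div_pow]; ring,
      show c₂ * r ^ d * exp (-‖x‖ ^ 2) = c₂ * w by ring, mul_rpow (by positivity) hw.le,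
      mul_rpow hc₂.le hw.le, show β - δ = (β - 1) + (1 - δ) by ring, rpow_add hw]
    ring
  calc _ ≤ gaussMeasure d (ball x (r / 2)) ^ (β - 1) *
        ∫⁻ y in ball x r, ENNReal.ofReal |Ω (x - y)| * ENNReal.ofReal |f y| ∂gaussMeasure d :=
        setLIntegral_annulus_mul_rpow_le _ hβ x
          (lt_of_lt_of_le (ENNReal.ofReal_pos.2 (hpos (half_pos hr))) hlo').ne' _
    _ ≤ gaussMeasure d (ball x (r / 2)) ^ (β - 1) *
        (gaussMeasure d (ball x r) ^ (1 - δ) * roughMax (2 * a) δ Ω f x) := by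
        gcongr
        exact lintegral_ball_le_rpow_mul_roughMax Ω f hadm
          (lt_of_lt_of_le (ENNReal.ofReal_pos.2 (hpos hr)) hlo).ne'
          (hhi.trans_lt ENNReal.ofReal_lt_top).ne
    _ ≤ ENNReal.ofReal ((c₁ * (r / 2) ^ d * exp (-‖x‖ ^ 2)) ^ (β - 1) *
          (c₂ * r ^ d * exp (-‖x‖ ^ 2)) ^ (1 - δ)) * roughMax (2 * a) δ Ω f x := by
        rw [← mul_assoc]
        gcongr
        exact ENNReal.rpow_mul_rpow_le_ofReal (hpos (half_pos hr)) (by positivity) hlo' hhi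
          (by linarith) (by linarith)
    _ = _ := by
        rw [hK, ENNReal.ofReal_mul (by positivity)]
        ring

theorem ofReal_abs_roughIfrac_le_tsum_dyadicAnnulus {d : ℕ} [NeZero d] (a β : ℝ)
    (Ω f : Euc d → ℝ) (x : Euc d) :
    ENNReal.ofReal |roughIfrac a β Ω f x| ≤
      ∑' k : ℕ, ∫⁻ y in ball x (a * adm x / 2 ^ k) \ ball x (a * adm x / 2 ^ (k + 1)),
        ENNReal.ofReal |Ω (x - y)| * ENNReal.ofReal |f y| *
          gaussMeasure d (ball x ‖x - y‖) ^ (β - 1) ∂gaussMeasure d := by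
  refine (ofReal_abs_roughIfrac_le a β Ω f x).trans ?_
  simpa using lintegral_ball_le_tsum_annulus _
    (gaussMeasure_absolutelyContinuous d (measure_singleton x))
    (tendsto_const_nhds.div_atTop (tendsto_pow_atTop_atTop_of_one_lt one_lt_two)) _

theorem setLIntegral_dyadicAnnulus_le {d : ℕ} {a β δ c₁ c₂ : ℝ} (hβ : β ≤ 1) (hδ : δ ≤ 1)
    (hc₁ : 0 < c₁) (hc₂ : 0 < c₂) {x : Euc d}
    (hγ : ∀ r, 0 < r → r ≤ a * adm x →
      ENNReal.ofReal (c₁ * r ^ d * exp (-‖x‖ ^ 2)) ≤ gaussMeasure d (ball x r) ∧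
      gaussMeasure d (ball x r) ≤ ENNReal.ofReal (c₂ * r ^ d * exp (-‖x‖ ^ 2)))
    (Ω f : Euc d → ℝ) (hR : 0 < a * adm x) (k : ℕ) :
    ∫⁻ y in ball x (a * adm x / 2 ^ k) \ ball x (a * adm x / 2 ^ (k + 1)),
        ENNReal.ofReal |Ω (x - y)| * ENNReal.ofReal |f y| *
          gaussMeasure d (ball x ‖x - y‖) ^ (β - 1) ∂gaussMeasure d ≤
      ENNReal.ofReal ((c₁ / 2 ^ d) ^ (β - 1) * c₂ ^ (1 - δ)) * roughMax (2 * a) δ Ω f x *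
        ENNReal.ofReal (((a * adm x) ^ d * exp (-‖x‖ ^ 2) * ((2 ^ d)⁻¹) ^ k) ^ (β - δ)) := by
  have hw : (a * adm x / 2 ^ k) ^ d * exp (-‖x‖ ^ 2) =
      (a * adm x) ^ d * exp (-‖x‖ ^ 2) * ((2 ^ d)⁻¹) ^ k := by
    rw [div_pow, inv_pow, ← pow_mul, ← pow_mul, mul_comm k d]
    ring
  rw [pow_succ, ← div_div, ← hw]
  exact setLIntegral_annulus_le hβ hδ hc₁ hc₂ hγ Ω f (by positivity)
    (div_le_self hR.le (one_le_pow₀ one_le_two))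

theorem stmt13_general {d : ℕ} (hd : 0 < d) (a : ℝ) (ha : 0 < a)
    (β ε : ℝ) (hβ : β ∈ Ioo (0 : ℝ) 1) (hε : 0 < ε)
    (hβε' : β + ε < 1)
    (Ω : Euc d → ℝ) :
    ∃ C : ℝ≥0∞, C ≠ ⊤ ∧ ∀ f : Euc d → ℝ, LocallyIntegrable f (gaussMeasure d) →
      ∀ x : Euc d,
        ENNReal.ofReal |roughIfrac a β Ω f x| ≤
          C * (roughMax (2 * a) (β + ε) Ω f x) ^ ((1 : ℝ) / 2) *
            (roughMax (2 * a) (β - ε) Ω f x) ^ ((1 : ℝ) / 2) := by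
  have : NeZero d := ⟨hd.ne'⟩
  obtain ⟨c₁, c₂, hc₁, hc₂, hγ⟩ := gaussMeasure_ball_comparable d ha.le
  obtain ⟨C₀, hC₀, hsum⟩ := exists_tsum_le_of_le_geometric_rpow (q := (2 ^ d)⁻¹) (by positivity)
    (inv_lt_one_of_one_lt₀ (one_lt_pow₀ (one_lt_two : (1 : ℝ) < 2) hd.ne')) hε
  set K : ℝ → ℝ := fun δ => (c₁ / 2 ^ d) ^ (β - 1) * c₂ ^ (1 - δ)
  refine ⟨C₀ * ENNReal.ofReal (K (β + ε)) ^ (1 / 2 : ℝ) * ENNReal.ofReal (K (β - ε)) ^ (1 / 2 : ℝ),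
    by finiteness, fun f _ x => ?_⟩
  have hR : 0 < a * adm x := mul_pos ha (adm_pos x)
  calc ENNReal.ofReal |roughIfrac a β Ω f x|
      ≤ ∑' k : ℕ, ∫⁻ y in ball x (a * adm x / 2 ^ k) \ ball x (a * adm x / 2 ^ (k + 1)),
          ENNReal.ofReal |Ω (x - y)| * ENNReal.ofReal |f y| *
            gaussMeasure d (ball x ‖x - y‖) ^ (β - 1) ∂gaussMeasure d :=
        ofReal_abs_roughIfrac_le_tsum_dyadicAnnulus a β Ω f x
    _ ≤ C₀ * (ENNReal.ofReal (K (β + ε)) * roughMax (2 * a) (β + ε) Ω f x) ^ (1 / 2 : ℝ) *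
          (ENNReal.ofReal (K (β - ε)) * roughMax (2 * a) (β - ε) Ω f x) ^ (1 / 2 : ℝ) :=
        hsum ((a * adm x) ^ d * exp (-‖x‖ ^ 2)) (by positivity) _ _ _
          (fun k => (setLIntegral_dyadicAnnulus_le hβ.2.le hβε'.le hc₁ hc₂ (hγ x) Ω f hR k).trans_eq
            (by rw [sub_add_cancel_left]))
          (fun k => (setLIntegral_dyadicAnnulus_le hβ.2.le (by linarith [hβ.2] : β - ε ≤ 1) hc₁ hc₂
            (hγ x) Ω f hR k).trans_eq (by rw [_root_.sub_sub_cancel]))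
    _ = _ := by
        rw [ENNReal.mul_rpow_of_nonneg _ _ (by norm_num),
          ENNReal.mul_rpow_of_nonneg _ _ (by norm_num)]
        ring

/-- pointwise bound of the local rough fractional integral by the geometric
mean of two local rough fractional maximal functions. -/
theorem stmt13 {d : ℕ} (hd : 0 < d) (a : ℝ) (ha : 0 < a)
    (β ε : ℝ) (hβ : β ∈ Ioo (0 : ℝ) 1) (hε : 0 < ε)
    (hβε : 0 < β - ε) (hβε' : β + ε < 1)
    (s : ℝ) (hs : 1 < s)
    (Ω : Euc d → ℝ) (hΩm : Measurable Ω)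
    (hΩh : ∀ (t : ℝ) (x : Euc d), 0 < t → x ≠ 0 → Ω (t • x) = Ω x)
    (hΩs : (∫⁻ z : sphere (0 : Euc d) 1,
        ENNReal.ofReal |Ω ↑z| ^ s ∂sphereMeasure d) < ⊤) :
    ∃ C : ℝ≥0∞, C ≠ ⊤ ∧ ∀ f : Euc d → ℝ, LocallyIntegrable f (gaussMeasure d) →
      ∀ x : Euc d,
        ENNReal.ofReal |roughIfrac a β Ω f x| ≤
          C * (roughMax (2 * a) (β + ε) Ω f x) ^ ((1 : ℝ) / 2) *
            (roughMax (2 * a) (β - ε) Ω f x) ^ ((1 : ℝ) / 2) :=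
  stmt13_general hd a ha β ε hβ hε hβε' Ω
end
end

section
/- Let a>0. There exist constants 0 < c_1 ≤ c_2 depending only on a and d such that for every admissible ball B = B(c_B, r) ∈ 𝓑_a: c_1 · e^{−|c_B|²} r^d ≤ γ(B) ≤ c_2 · e^{−|c_B|²} r^d. -/
open MeasureTheory ENNReal Real Set Metric
open scoped Classical

noncomputable section

/-- for admissible balls, γ(B) ≍ e^{-|c_B|²} r^d with constants depending
only on a and d. -/
theorem stmt18 {d : ℕ} (hd : 0 < d) (a : ℝ) (ha : 0 < a) :
    ∃ c₁ c₂ : ℝ, 0 < c₁ ∧ c₁ ≤ c₂ ∧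
      ∀ (c : Euc d) (r : ℝ), IsAdm a c r →
        ENNReal.ofReal (c₁ * Real.exp (-‖c‖ ^ 2) * r ^ d) ≤ gaussMeasure d (ball c r) ∧
        gaussMeasure d (ball c r) ≤ ENNReal.ofReal (c₂ * Real.exp (-‖c‖ ^ 2) * r ^ d) := by
  haveI : Nontrivial (Euc d) := Module.nontrivial_of_finrank_pos (R := ℝ)
    (by rw [finrank_euclideanSpace_fin]; exact hd)
  set K : ℝ := 2 * a + a ^ 2 with hKdef
  have hK0 : 0 ≤ K := by positivity
  set v : ℝ := (volume (ball (0 : Euc d) 1)).toReal with hvdef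
  have hvne : volume (ball (0 : Euc d) 1) ≠ ⊤ := measure_ball_lt_top.ne
  have hv0 : 0 < v := ENNReal.toReal_pos (measure_ball_pos _ _ one_pos).ne' hvne
  have hvof : ENNReal.ofReal v = volume (ball (0 : Euc d) 1) := ENNReal.ofReal_toReal hvne
  have hpi : (0:ℝ) < Real.pi ^ (-(d : ℝ) / 2) := Real.rpow_pos_of_pos Real.pi_pos _
  refine ⟨Real.pi ^ (-(d : ℝ) / 2) * Real.exp (-K) * v,
          Real.pi ^ (-(d : ℝ) / 2) * Real.exp K * v, by positivity, ?_, ?_⟩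
  · have : Real.exp (-K) ≤ Real.exp K := Real.exp_le_exp.2 (by linarith)
    exact mul_le_mul_of_nonneg_right (mul_le_mul_of_nonneg_left this hpi.le) hv0.le
  intro c r ⟨hr0, hra⟩
  -- admissibility consequences
  have hadm : adm c ≤ 1 := by
    unfold adm; split
    · exact le_refl 1
    · next h => exact inv_le_one_of_one_le₀ (le_of_not_ge h)
  have hr_a : r < a := lt_of_lt_of_le hra (by nlinarith)
  have hrc : r * ‖c‖ ≤ a := by
    unfold adm at hra
    rcases le_or_gt ‖c‖ 1 with h | h
    · rw [if_pos h, mul_one] at hra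
      nlinarith [norm_nonneg c]
    · rw [if_neg (not_le.2 h)] at hra
      have h0 : (0:ℝ) < ‖c‖ := lt_trans one_pos h
      have := mul_lt_mul_of_pos_right hra h0
      rw [mul_assoc, inv_mul_cancel₀ h0.ne', mul_one] at this
      exact this.le
  -- pointwise comparison of exponentials on the ball
  have hbound : ∀ x ∈ ball c r, |‖x‖ ^ 2 - ‖c‖ ^ 2| ≤ K := by
    intro x hx
    have habs : |‖x‖ - ‖c‖| ≤ r := by
      refine (abs_norm_sub_norm_le x c).trans ?_
      rw [← dist_eq_norm]; exact (mem_ball.mp hx).le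
    obtain ⟨h1, h2⟩ := abs_le.1 habs
    rw [abs_le]
    constructor <;> nlinarith [norm_nonneg x, norm_nonneg c, hr0.le, hr_a.le, hrc]
  -- volume of the ball
  have hvol : volume (ball c r) = ENNReal.ofReal (r ^ d) * ENNReal.ofReal v := by
    rw [hvof, Measure.addHaar_ball volume c hr0.le, finrank_euclideanSpace_fin]
  have hmain : gaussMeasure d (ball c r)
      = ∫⁻ x in ball c r,
          ENNReal.ofReal (Real.pi ^ (-(d : ℝ) / 2) * Real.exp (-‖x‖ ^ 2)) := by
    rw [gaussMeasure, withDensity_apply _ measurableSet_ball]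
  constructor
  · calc ENNReal.ofReal (Real.pi ^ (-(d : ℝ) / 2) * Real.exp (-K) * v
          * Real.exp (-‖c‖ ^ 2) * r ^ d)
        = ENNReal.ofReal (Real.pi ^ (-(d : ℝ) / 2) * Real.exp (-K + -‖c‖ ^ 2))
            * (ENNReal.ofReal (r ^ d) * ENNReal.ofReal v) := by
          rw [← ENNReal.ofReal_mul (by positivity), ← ENNReal.ofReal_mul (by positivity)]
          congr 1
          rw [Real.exp_add]; ring
      _ = ∫⁻ _ in ball c r,
            ENNReal.ofReal (Real.pi ^ (-(d : ℝ) / 2) * Real.exp (-K + -‖c‖ ^ 2)) := by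
          rw [setLIntegral_const, hvol]
      _ ≤ ∫⁻ x in ball c r,
            ENNReal.ofReal (Real.pi ^ (-(d : ℝ) / 2) * Real.exp (-‖x‖ ^ 2)) := by
          refine setLIntegral_mono' measurableSet_ball fun x hx => ?_
          refine ENNReal.ofReal_le_ofReal ?_
          refine mul_le_mul_of_nonneg_left (Real.exp_le_exp.2 ?_) hpi.le
          have := abs_le.1 (hbound x hx)
          linarith [this.2]
      _ = gaussMeasure d (ball c r) := hmain.symm
  · calc gaussMeasure d (ball c r)
        = ∫⁻ x in ball c r,
            ENNReal.ofReal (Real.pi ^ (-(d : ℝ) / 2) * Real.exp (-‖x‖ ^ 2)) := hmain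
      _ ≤ ∫⁻ _ in ball c r,
            ENNReal.ofReal (Real.pi ^ (-(d : ℝ) / 2) * Real.exp (K + -‖c‖ ^ 2)) := by
          refine setLIntegral_mono' measurableSet_ball fun x hx => ?_
          refine ENNReal.ofReal_le_ofReal ?_
          refine mul_le_mul_of_nonneg_left (Real.exp_le_exp.2 ?_) hpi.le
          have := abs_le.1 (hbound x hx)
          linarith [this.1]
      _ = ENNReal.ofReal (Real.pi ^ (-(d : ℝ) / 2) * Real.exp K * v
            * Real.exp (-‖c‖ ^ 2) * r ^ d) := by
          rw [setLIntegral_const, hvol,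
            ← ENNReal.ofReal_mul (by positivity), ← ENNReal.ofReal_mul (by positivity)]
          congr 1
          rw [Real.exp_add]; ring
end
end
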